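/- arXiv:1911.08686 — 9 statements merged into one kernel-verified Lean document; each statement's English description precedes it below -/
import Mathlib

section
/- Every tree T of order n ≥ 2 contains an independent set I of size at least n/4 such that every vertex of I has degree at most 2 in T. -/
/-!
A tree on `n ≥ 2` vertices has no isolated vertex and `n - 1` edges, so counting degrees
(every vertex of degree at least 3 contributes 3) shows that at least `(n + 2) / 2` vertices
have degree at most 2. A tree is 2-colourable, so one colour class contains at least half of
them, and it is independent.
-/

open Finset

namespace SimpleGraph

variable {V : Type*} {G : SimpleGraph V}

theorem Colorable.exists_isIndepSet_subset_card_le_mul {k : ℕ} (hG : G.Colorable k)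
    (s : Finset V) :
    ∃ t ⊆ s, G.IsIndepSet t ∧ #s ≤ k * #t := by
  classical
  obtain ⟨C⟩ := hG
  rcases k.eq_zero_or_pos with rfl | hk
  · have : IsEmpty V := ⟨fun v => (C v).elim0⟩
    exact ⟨∅, by simp [Finset.eq_empty_of_isEmpty s]⟩
  have : NeZero k := ⟨hk.ne'⟩
  obtain ⟨c, -, hc⟩ := exists_le_card_fiber_of_nsmul_le_card_of_maps_to (b := (#s : ℚ) / k)
    (fun v _ => mem_univ (C v)) univ_nonempty
    (by rw [card_univ, Fintype.card_fin, nsmul_eq_mul, mul_div_cancel₀ _ (by positivity)])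
  refine ⟨{v ∈ s | C v = c}, filter_subset _ _, fun v hv w hw _ hvw => ?_, ?_⟩
  · simp only [coe_filter, Set.mem_ofPred_eq] at hv hw
    exact C.valid hvw (hv.2.trans hw.2.symm)
  · rw [div_le_iff₀ (by positivity)] at hc
    exact_mod_cast (mul_comm (k : ℚ) _ ▸ hc)

variable [Fintype V] [DecidableRel G.Adj]

theorem three_mul_card_le_sum_degrees_add (hpos : ∀ v, 0 < G.degree v) :
    3 * Fintype.card V ≤ ∑ v, G.degree v + 2 * #{v | G.degree v ≤ 2} := by
  rw [card_filter, mul_sum, ← sum_add_distrib, Fintype.card_eq_sum_ones, mul_sum]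
  refine sum_le_sum fun v _ => ?_
  have := hpos v
  split_ifs <;> omega

theorem IsTree.card_add_two_le_two_mul_card_degree_le_two [Nontrivial V] (hT : G.IsTree) :
    Fintype.card V + 2 ≤ 2 * #{v | G.degree v ≤ 2} := by
  have hcount := three_mul_card_le_sum_degrees_add fun v =>
    hT.connected.preconnected.degree_pos_of_nontrivial v
  have hedges := hT.card_edgeFinset
  rw [sum_degrees_eq_twice_card_edges] at hcount
  omega

end SimpleGraph

/-- Every tree T of order n ≥ 2 contains an independent set I of size
at least n/4 such that every vertex of I has degree at most 2 in T. -/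
theorem stmt_1 {V : Type*} [Fintype V] (G : SimpleGraph V) [DecidableRel G.Adj]
    (hT : G.IsTree) (hn : 2 ≤ Fintype.card V) :
    ∃ I : Finset V,
      (∀ x ∈ I, ∀ y ∈ I, x ≠ y → ¬ G.Adj x y) ∧
      (∀ x ∈ I, G.degree x ≤ 2) ∧
      ((I.card : ℝ) ≥ (Fintype.card V : ℝ) / 4) := by
  have : Nontrivial V := Fintype.one_lt_card_iff_nontrivial.mp hn
  obtain ⟨I, hIS, hI, hcard⟩ :=
    hT.colorable_two.exists_isIndepSet_subset_card_le_mul {v | G.degree v ≤ 2}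
  have hS := hT.card_add_two_le_two_mul_card_degree_le_two
  refine ⟨I, fun x hx y hy => hI hx hy, fun x hx => (mem_filter.mp (hIS hx)).2, ?_⟩
  rw [ge_iff_le, div_le_iff₀ four_pos]
  exact_mod_cast (by omega : Fintype.card V ≤ #I * 4)
end

section
/- Every biconnected (2-connected) graph of order at least 4 containing no chorded cycle is triangle-free. -/
/-!
Let `xyz` be a triangle and write `w ~_v u` when `w` and `u` are joined in `G` with the vertex
`v` deleted and the triangle edge opposite `v` removed. A path from `x` to `y` avoiding `z` and
the edge `xy` closes up through `y z x` to a cycle with chord `xy`, so `x ≁_z y`, and likewise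
for the other pairs. Hence if `w ~_z x` then `w ≁_z y`, so a walk from `w` to `x` misses `y`,
giving `w ~_y x`. For a fourth vertex `w`, 2-connectivity gives `w ~_z x` or `w ~_z y`, say the
former, so also `w ~_y x`; and it gives `w ~_x y` or `w ~_x z`, which the same rotation turns into `w ~_z y`
or `w ~_y z`, contradicting `x ≁_z y` or `x ≁_y z`.
-/

/-- A chord of the closed walk `c`: an edge of `G` between two vertices of `c`
that is not an edge of `c`. -/
def HasChord {V : Type*} (G : SimpleGraph V) {u : V} (c : G.Walk u u) : Prop :=
  ∃ a b : V, a ∈ c.support ∧ b ∈ c.support ∧ G.Adj a b ∧ s(a, b) ∉ c.edges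

/-- `G` contains no chorded cycle. -/
def NoChordedCycle {V : Type*} (G : SimpleGraph V) : Prop :=
  ∀ (u : V) (c : G.Walk u u), c.IsCycle → ¬ HasChord G c

/-- `G` is 2-connected (biconnected): it has at least 3 vertices and deleting any
single vertex leaves a connected graph. -/
def TwoConnected {V : Type*} (G : SimpleGraph V) : Prop :=
  3 ≤ Nat.card V ∧ ∀ v : V, (G.induce {u : V | u ≠ v}).Connected

open SimpleGraph

section

variable {V : Type*} {G : SimpleGraph V}

namespace SimpleGraph

lemma Walk.notMem_support_of_deleteIncidenceSet {z : V} :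
    ∀ {u v : V} (p : (G.deleteIncidenceSet z).Walk u v), u ≠ z → z ∉ p.support
  | _, _, .nil, hu => by simpa using hu.symm
  | _, _, .cons h p, hu => by
    rw [deleteIncidenceSet_adj] at h
    simpa [hu.symm] using notMem_support_of_deleteIncidenceSet p h.2.2

lemma Reachable.deleteEdges_or {K : SimpleGraph V} {u x y : V} (h : K.Reachable u x) :
    (K.deleteEdges {s(x, y)}).Reachable u x ∨ (K.deleteEdges {s(x, y)}).Reachable u y := by
  rw [reachable_iff_reflTransGen] at h
  induction h using Relation.ReflTransGen.head_induction_on with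
  | refl => exact .inl .rfl
  | @head u b hub _ ih =>
    by_cases he : s(u, b) = s(x, y)
    · rcases Sym2.eq_iff.mp he with ⟨rfl, -⟩ | ⟨rfl, -⟩
      · exact .inl .rfl
      · exact .inr .rfl
    · have hub' : (K.deleteEdges {s(x, y)}).Adj u b := by simp [hub, he]
      exact ih.imp hub'.reachable.trans hub'.reachable.trans

lemma Reachable.deleteIncidenceSet_of_not_reachable {H : SimpleGraph V} {a b y : V}
    (hab : H.Reachable a b) (hay : ¬ H.Reachable a y) :
    (H.deleteIncidenceSet y).Reachable a b := by
  classical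
  obtain ⟨p⟩ := hab
  have hy : y ∉ p.support := fun hy => hay (p.takeUntil y hy).reachable
  refine ⟨p.transfer _ fun e he => ?_⟩
  rw [edgeSet_deleteIncidenceSet]
  exact ⟨p.edges_subset_edgeSet he, fun hi => hy (Walk.mem_support_of_mem_edges he hi.2)⟩

end SimpleGraph

lemma TwoConnected.reachable_deleteIncidenceSet (h : TwoConnected G) {v a b : V}
    (ha : a ≠ v) (hb : b ≠ v) : (G.deleteIncidenceSet v).Reachable a b := by
  have hv : v ∉ {u : V | u ≠ v} := fun h => h rfl
  have hab := h.2 v (⟨a, ha⟩ : {u : V | u ≠ v}) ⟨b, hb⟩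
  rw [← G.induce_deleteIncidenceSet_of_notMem hv] at hab
  exact hab.map (Embedding.induce _).toHom

section Triangle

variable {x y z : V} (hxy : G.Adj x y) (hyz : G.Adj y z) (hzx : G.Adj z x)
include hxy hyz hzx

lemma not_noChordedCycle_of_isPath {P : G.Walk x y} (hP : P.IsPath) (hz : z ∉ P.support)
    (he : s(x, y) ∉ P.edges) : ¬ NoChordedCycle G := by
  intro hnc
  have hzxP : s(z, x) ∉ P.edges := fun h => hz (P.fst_mem_support_of_mem_edges h)
  refine hnc z ((P.concat hyz).cons hzx) ?_ ⟨x, y, ?_, ?_, hxy, ?_⟩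
  · rw [Walk.cons_isCycle_iff]
    refine ⟨hP.concat hz hyz, ?_⟩
    simp [Walk.edges_concat, hzxP, hxy.ne, hyz.ne', hzx.ne']
  · simp
  · simp
  · simp [Walk.edges_concat, he, hxy.ne, hyz.ne, hzx.ne']

variable (hnc : NoChordedCycle G)
include hnc

lemma NoChordedCycle.not_reachable_of_triangle :
    ¬ ((G.deleteIncidenceSet z).deleteEdges {s(x, y)}).Reachable x y := by
  classical
  rintro ⟨p⟩
  have hle : (G.deleteIncidenceSet z).deleteEdges {s(x, y)} ≤ G :=
    (deleteEdges_le _).trans (G.deleteIncidenceSet_le z)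
  refine not_noChordedCycle_of_isPath hxy hyz hzx (P := p.bypass.mapLe hle)
    ((Walk.isPath_mapLe hle).mpr p.bypass_isPath) ?_ ?_ hnc
  · simpa [Walk.support_mapLe_eq_support] using
      (p.bypass.mapLe (deleteEdges_le _)).notMem_support_of_deleteIncidenceSet hzx.ne'
  · rw [Walk.edges_mapLe_eq_edges]
    intro h
    simpa using p.bypass.edges_subset_edgeSet h

lemma NoChordedCycle.reachable_deleteEdges_rotate {w : V}
    (h : ((G.deleteIncidenceSet z).deleteEdges {s(x, y)}).Reachable w x) :
    ((G.deleteIncidenceSet y).deleteEdges {s(x, z)}).Reachable w x := by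
  have hwy : ¬ ((G.deleteIncidenceSet z).deleteEdges {s(x, y)}).Reachable w y :=
    fun hwy => hnc.not_reachable_of_triangle hxy hyz hzx (h.symm.trans hwy)
  refine (h.deleteIncidenceSet_of_not_reachable hwy).mono fun a b hab => ?_
  simp only [deleteIncidenceSet_adj, deleteEdges_adj, Set.mem_singleton_iff, Sym2.eq_iff] at hab ⊢
  grind

lemma NoChordedCycle.not_reachable_of_reachable_deleteIncidenceSet {w : V}
    (hwy : (G.deleteIncidenceSet x).Reachable w y) :
    ¬ ((G.deleteIncidenceSet z).deleteEdges {s(x, y)}).Reachable w x := by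
  intro hwx
  have hwx' := hnc.reachable_deleteEdges_rotate hxy hyz hzx hwx
  rcases hwy.deleteEdges_or (y := z) with hwy | hwz
  · have hwy' := hnc.reachable_deleteEdges_rotate hyz hzx hxy hwy
    refine hnc.not_reachable_of_triangle hxy hyz hzx (hwx.symm.trans ?_)
    simpa [Sym2.eq_swap] using hwy'
  · have hwz' := hnc.reachable_deleteEdges_rotate hyz.symm hxy.symm hzx.symm
      (by simpa [Sym2.eq_swap] using hwz)
    refine hnc.not_reachable_of_triangle hzx.symm hyz.symm hxy.symm (hwx'.symm.trans ?_)
    simpa [Sym2.eq_swap] using hwz'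

end Triangle

end

/-- Every biconnected graph of order at least 4 containing no chorded
cycle is triangle-free. -/
theorem stmt_3 {V : Type*} [Fintype V] (G : SimpleGraph V)
    (h2 : TwoConnected G) (hn : 4 ≤ Fintype.card V) (hnc : NoChordedCycle G) :
    G.CliqueFree 3 := by
  classical
  intro s hs
  obtain ⟨x, y, z, hxy, hxz, hyz, rfl⟩ := is3Clique_iff.mp hs
  have hcard : ({x, y, z} : Finset V).card < (Finset.univ : Finset V).card :=
    Finset.card_le_three.trans_lt (by rw [Finset.card_univ]; omega)
  obtain ⟨w, -, hw⟩ := Finset.exists_mem_notMem_of_card_lt_card hcard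
  simp only [Finset.mem_insert, Finset.mem_singleton, not_or] at hw
  obtain ⟨hwx, hwy, hwz⟩ := hw
  rcases (h2.reachable_deleteIncidenceSet hwz hxz.ne).deleteEdges_or (y := y) with h | h
  · exact hnc.not_reachable_of_reachable_deleteIncidenceSet hxy hyz hxz.symm
      (h2.reachable_deleteIncidenceSet hwx hxy.ne') h
  · exact hnc.not_reachable_of_reachable_deleteIncidenceSet hxy.symm hxz hyz.symm
      (h2.reachable_deleteIncidenceSet hwy hxy.ne) (by simpa [Sym2.eq_swap] using h)
end

section
/- Let C₁, ..., C_r be a set of r vertex-disjoint chorded cycles in a graph G minimizing the total number of vertices in the union of the cycles. If |C_i| ≥ 7 for some i, then C_i has at most two chords, and if it has exactly two chords, these chords cross. -/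
/-- Two chords of the cycle `c` cross: their endpoints alternate around the cycle
(positions taken along `c.support.tail`, which lists each vertex of the cycle once). -/
def Crossing {V : Type*} [DecidableEq V] {G : SimpleGraph V} {u : V} (c : G.Walk u u)
    (e₁ e₂ : Sym2 V) : Prop :=
  ∃ a b x y : V,
    ((e₁ = s(a, b) ∧ e₂ = s(x, y)) ∨ (e₁ = s(x, y) ∧ e₂ = s(a, b))) ∧
    c.support.tail.idxOf a < c.support.tail.idxOf x ∧
    c.support.tail.idxOf x < c.support.tail.idxOf b ∧
    c.support.tail.idxOf b < c.support.tail.idxOf y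

lemma Set.InjOn.sym2_mk_ne {α β : Type*} {f : α → β} {s : Set α} (hf : s.InjOn f) {k a b : α}
    (hk : k ∈ s) (ha : a ∈ s) (hb : b ∈ s) (hka : k ≠ a) (hkb : k ≠ b) (z : β) :
    s(f k, z) ≠ s(f a, f b) := by
  intro h
  rcases Sym2.mem_iff.1 (h ▸ Sym2.mem_mk_left _ z) with h' | h'
  exacts [hka (hf hk ha h'), hkb (hf hk hb h')]

namespace SimpleGraph.Walk

variable {V : Type*} {G : SimpleGraph V}

section Segment

variable {u v : V} (p : G.Walk u v) {i j : ℕ} (hij : i ≤ j)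

def segment : G.Walk (p.getVert i) (p.getVert j) :=
  ((p.drop i).take (j - i)).copy rfl (by rw [drop_getVert, Nat.add_sub_cancel' hij])

lemma length_segment (hj : j ≤ p.length) : (p.segment hij).length = j - i := by
  simp only [segment, length_copy, take_length, drop_length]
  omega

lemma getVert_segment {t : ℕ} (ht : t ≤ j - i) :
    (p.segment hij).getVert t = p.getVert (i + t) := by
  simp [segment, Nat.min_eq_right ht]

lemma mem_support_segment (hj : j ≤ p.length) {z : V} :
    z ∈ (p.segment hij).support ↔ ∃ k, i ≤ k ∧ k ≤ j ∧ p.getVert k = z := by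
  rw [mem_support_iff_exists_getVert, length_segment p hij hj]
  constructor
  · rintro ⟨t, rfl, ht⟩
    exact ⟨i + t, by omega, by omega, (getVert_segment p hij ht).symm⟩
  · rintro ⟨k, hik, hkj, rfl⟩
    refine ⟨k - i, ?_, by omega⟩
    rw [getVert_segment p hij (by omega), Nat.add_sub_cancel' hik]

lemma support_segment_subset : (p.segment hij).support ⊆ p.support := by
  simp only [segment, support_copy, support_take, drop_support_eq_support_drop_min]
  exact List.Subset.trans (List.take_subset _ _) (List.drop_subset _ _)

lemma edges_segment_subset : (p.segment hij).edges ⊆ p.edges := by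
  simp only [segment, edges_copy, edges_take, edges_drop]
  exact List.Subset.trans (List.take_subset _ _) (List.drop_subset _ _)

lemma isPath_segment (hj : j ≤ p.length) (hinj : Set.InjOn p.getVert (Set.Icc i j)) :
    (p.segment hij).IsPath := by
  rw [← IsPath.getVert_injOn_iff]
  intro t ht t' ht' h
  simp only [Set.mem_ofPred_eq, length_segment p hij hj] at ht ht'
  rw [getVert_segment p hij ht, getVert_segment p hij ht'] at h
  have := hinj ⟨by omega, by omega⟩ ⟨by omega, by omega⟩ h
  omega

lemma isPath_append_cons_reverse_segment {i₁ j₁ i₂ j₂ : ℕ} (h₁ : i₁ ≤ j₁) (h₂ : j₁ < i₂)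
    (h₃ : i₂ ≤ j₂) (hj : j₂ ≤ p.length) (hinj : Set.InjOn p.getVert (Set.Icc i₁ j₂))
    (h : G.Adj (p.getVert j₁) (p.getVert j₂)) :
    ((p.segment h₁).append (cons h (p.segment h₃).reverse)).IsPath := by
  rw [isPath_def, support_append, support_cons, List.tail_cons, support_reverse,
    List.nodup_append, List.nodup_reverse]
  have hP₁ := p.isPath_segment h₁ (by omega) (hinj.mono (Set.Icc_subset_Icc le_rfl (by omega)))
  have hP₂ := p.isPath_segment h₃ hj (hinj.mono (Set.Icc_subset_Icc (by omega) le_rfl))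
  refine ⟨hP₁.support_nodup, hP₂.support_nodup, ?_⟩
  intro z hz z' hz' hzz'
  rw [List.mem_reverse, mem_support_segment _ _ hj] at hz'
  rw [mem_support_segment _ _ (by omega)] at hz
  obtain ⟨k, hk₁, hk₂, rfl⟩ := hz
  obtain ⟨k', hk₁', hk₂', rfl⟩ := hz'
  have := hinj ⟨hk₁, by omega⟩ ⟨by omega, hk₂'⟩ hzz'
  omega

end Segment

section Doubled

variable {u : V} {c : G.Walk u u}

/-- The `k`-th vertex of `c.doubled` is the vertex at position `k % c.length` of `c` (see
`getVert_doubled`), so every arc of `c`, also one passing the start vertex, is a segment of it. -/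
def doubled (c : G.Walk u u) : G.Walk c.snd u := c.tail.append c

lemma length_doubled (hc : ¬ c.Nil) : c.doubled.length = 2 * c.length - 1 := by
  have := length_tail_add_one hc
  simp only [doubled, length_append]
  omega

lemma edges_doubled_subset : c.doubled.edges ⊆ c.edges := by
  simp only [doubled, edges_append, edges_tail]
  exact List.append_subset.2 ⟨List.tail_subset _, List.Subset.refl _⟩

lemma support_doubled_subset : c.doubled.support ⊆ c.support := by
  intro x h
  simp only [doubled, mem_support_append_iff] at h
  rcases h with h | h
  · obtain ⟨n, rfl, -⟩ := mem_support_iff_exists_getVert.1 h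
    rw [getVert_tail]
    exact c.getVert_mem_support _
  · exact h

lemma getVert_doubled (hc : ¬ c.Nil) {k : ℕ} (hk : k < 2 * c.length) :
    c.doubled.getVert k = c.tail.getVert (k % c.length) := by
  have hlen := length_tail_add_one hc
  rw [doubled, getVert_append]
  split_ifs with h
  · rw [Nat.mod_eq_of_lt (by omega)]
  · rcases Nat.lt_or_ge k c.length with h' | h'
    · rw [Nat.mod_eq_of_lt h', show k - c.tail.length = 0 by omega,
        show k = c.tail.length by omega, getVert_zero, getVert_length]
    · rw [Nat.mod_eq_sub_mod h', Nat.mod_eq_of_lt (by omega), getVert_tail,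
        show k - c.tail.length = k - c.length + 1 by omega]

lemma mk_getVert_doubled_mem_edges (hc : ¬ c.Nil) {k : ℕ} (hk : k + 1 < 2 * c.length) :
    s(c.doubled.getVert k, c.doubled.getVert (k + 1)) ∈ c.edges := by
  refine edges_doubled_subset <| (mk_mem_edges_iff_exists _).2 ⟨k, ?_, rfl⟩
  rw [length_doubled hc]
  omega

lemma injOn_getVert_doubled (hc : c.IsCycle) {i j : ℕ} (hj : j < i + c.length)
    (hj' : j < 2 * c.length) : Set.InjOn c.doubled.getVert (Set.Icc i j) := by
  have hlen := length_tail_add_one hc.not_nil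
  have hmod : ∀ k, k % c.length ≤ c.tail.length := fun k => by
    have := Nat.mod_lt k (show 0 < c.length by omega)
    omega
  intro k ⟨hik, hkj⟩ k' ⟨hik', hkj'⟩ h
  wlog hkk' : k ≤ k' generalizing k k'
  · exact (this hik' hkj' hik hkj h.symm (by omega)).symm
  rw [getVert_doubled hc.not_nil (by omega), getVert_doubled hc.not_nil (by omega)] at h
  have hmod' := hc.isPath_tail.getVert_injOn (hmod k) (hmod k') h
  have hdvd := Nat.sub_mod_eq_zero_of_mod_eq hmod'.symm
  rw [Nat.mod_eq_of_lt (by omega)] at hdvd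
  omega

lemma mem_support_tail_of_not_nil (hc : ¬ c.Nil) {x : V} (hx : x ∈ c.support) :
    x ∈ c.support.tail := by
  rw [← cons_tail_support, List.mem_cons] at hx
  rcases hx with rfl | hx
  · exact end_mem_tail_support hc
  · exact hx

variable [DecidableEq V]

/-- Positions are indices in `c.support.tail`, as in `Crossing`: the start vertex of `c` has
position `c.length - 1`. -/
def position (c : G.Walk u u) (x : V) : ℕ := c.support.tail.idxOf x

variable (hc : ¬ c.Nil) {x : V} (hx : x ∈ c.support)
include hc hx

lemma position_lt_length : c.position x < c.length := by
  have h := List.idxOf_lt_length_of_mem (mem_support_tail_of_not_nil hc hx)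
  rwa [List.length_tail, length_support, Nat.add_sub_cancel] at h

lemma getVert_doubled_position : c.doubled.getVert (c.position x) = x := by
  have hx' : x ∈ c.tail.support := by
    rw [support_tail_of_not_nil _ hc]
    exact mem_support_tail_of_not_nil hc hx
  rw [getVert_doubled hc (by have := position_lt_length hc hx; omega),
    Nat.mod_eq_of_lt (position_lt_length hc hx)]
  simpa [position, support_tail_of_not_nil _ hc] using getVert_support_idxOf _ hx'

lemma getVert_doubled_position_add_length :
    c.doubled.getVert (c.position x + c.length) = x := by
  have h := position_lt_length hc hx
  rw [getVert_doubled hc (by omega), Nat.add_mod_right, ← getVert_doubled hc (by omega)]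
  exact getVert_doubled_position hc hx

omit hx in
lemma eq_of_position_eq {y : V} (hx : x ∈ c.support) (hy : y ∈ c.support)
    (h : c.position x = c.position y) : x = y := by
  rw [← getVert_doubled_position hc hx, ← getVert_doubled_position hc hy, h]

end Doubled

section Chords

variable {u : V} {c : G.Walk u u}

section IsChord

variable {x y : V} (h : c.IsChord s(x, y))
include h

lemma IsChord.adj : G.Adj x y := (isChord_sym2Mk.1 h).1

lemma IsChord.notMem_edges : s(x, y) ∉ c.edges := (isChord_sym2Mk.1 h).2.1

lemma IsChord.left_mem_support : x ∈ c.support := (isChord_sym2Mk.1 h).2.2.1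

lemma IsChord.right_mem_support : y ∈ c.support := (isChord_sym2Mk.1 h).2.2.2

lemma IsChord.symm : c.IsChord s(y, x) := by rwa [Sym2.eq_swap]

end IsChord

omit c in
lemma isChord_iff_forall_mem_support {v : V} {p : G.Walk u v} {e : Sym2 V} :
    p.IsChord e ↔ e ∈ G.edgeSet ∧ (∀ x ∈ e, x ∈ p.support) ∧ e ∉ p.edges := by
  induction e using Sym2.ind with
  | h x y =>
    simp only [isChord_sym2Mk, Sym2.forall_mem_pair]
    tauto

def HasShorterChordedCycle (c : G.Walk u u) : Prop :=
  ∃ (z : V) (D : G.Walk z z),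
    D.IsCycle ∧ HasChord G D ∧ D.support ⊆ c.support ∧ D.length < c.length

lemma hasShorterChordedCycle_of_isPath {a b x y : V} {P : G.Walk a b} (hP : P.IsPath)
    (hba : G.Adj b a) (hba' : s(b, a) ∉ P.edges) (hx : x ∈ P.support) (hy : y ∈ P.support)
    (hxy : G.Adj x y) (hxy' : s(x, y) ∉ P.edges) (hne : s(x, y) ≠ s(b, a))
    (hsub : P.support ⊆ c.support) (hlen : P.length + 1 < c.length) :
    c.HasShorterChordedCycle := by
  refine ⟨b, cons hba P, (cons_isCycle_iff P hba).2 ⟨hP, hba'⟩,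
    ⟨x, y, by simp [hx], by simp [hy], hxy, by simp [hne, hxy']⟩, ?_, by simpa using hlen⟩
  rw [support_cons]
  exact List.cons_subset.2 ⟨hsub P.end_mem_support, hsub⟩

lemma hasShorterChordedCycle_of_chord_within_arc (hc : c.IsCycle) {i j : ℕ} (hij : i ≤ j)
    (hji : j + 2 ≤ i + c.length) (hj : j < 2 * c.length) {a b x y : V}
    (ha : c.doubled.getVert i = a) (hb : c.doubled.getVert j = b) (hab : c.IsChord s(a, b))
    (hxy : c.IsChord s(x, y)) (hne : s(x, y) ≠ s(a, b))
    (hx : ∃ k, i ≤ k ∧ k ≤ j ∧ c.doubled.getVert k = x)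
    (hy : ∃ k, i ≤ k ∧ k ≤ j ∧ c.doubled.getVert k = y) :
    c.HasShorterChordedCycle := by
  subst ha hb
  have hjD : j ≤ c.doubled.length := by rw [length_doubled hc.not_nil]; omega
  have hedges : (c.doubled.segment hij).edges ⊆ c.edges :=
    List.Subset.trans (edges_segment_subset _ _) edges_doubled_subset
  refine hasShorterChordedCycle_of_isPath
    (c.doubled.isPath_segment hij hjD (injOn_getVert_doubled hc (by omega) hj)) hab.adj.symm
    (fun h => hab.symm.notMem_edges (hedges h))
    ((mem_support_segment _ hij hjD).2 hx) ((mem_support_segment _ hij hjD).2 hy) hxy.adj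
    (fun h => hxy.notMem_edges (hedges h)) (fun h => hne (h.trans Sym2.eq_swap))
    (List.Subset.trans (support_segment_subset _ _) support_doubled_subset) ?_
  rw [length_segment _ hij hjD]
  omega

/-- The cycle runs from `a₁` to `b₁` along `c`, over the chord to `b₂`, back along `c` to `a₂`,
and over the chord to `a₁`. -/
lemma hasShorterChordedCycle_of_chord_between_arcs (hc : c.IsCycle) {i₁ j₁ i₂ j₂ : ℕ}
    (h₁ : i₁ < j₁) (h₂ : j₁ < i₂) (h₃ : i₂ < j₂) (hwin : j₂ < i₁ + c.length)
    (hj : j₂ < 2 * c.length) (hlen : j₁ - i₁ + (j₂ - i₂) + 3 ≤ c.length) {a₁ b₁ a₂ b₂ x y : V}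
    (ha₁ : c.doubled.getVert i₁ = a₁) (hb₁ : c.doubled.getVert j₁ = b₁)
    (ha₂ : c.doubled.getVert i₂ = a₂) (hb₂ : c.doubled.getVert j₂ = b₂)
    (ha : c.IsChord s(a₁, a₂)) (hb : c.IsChord s(b₁, b₂)) (hxy : c.IsChord s(x, y))
    (hx : ∃ k, i₁ < k ∧ k < j₁ ∧ c.doubled.getVert k = x)
    (hy : ∃ k, i₂ < k ∧ k < j₂ ∧ c.doubled.getVert k = y) :
    c.HasShorterChordedCycle := by
  subst ha₁ hb₁ ha₂ hb₂
  obtain ⟨kx, hkx₁, hkx₂, rfl⟩ := hx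
  obtain ⟨ky, hky₁, hky₂, rfl⟩ := hy
  set W := c.doubled
  have hjD : j₂ ≤ W.length := by rw [length_doubled hc.not_nil]; omega
  have hinj : Set.InjOn W.getVert (Set.Icc i₁ j₂) := injOn_getVert_doubled hc hwin hj
  set P := (W.segment h₁.le).append (cons hb.adj (W.segment h₃.le).reverse) with hP
  have hsupp : ∀ z, z ∈ P.support ↔
      (∃ k, i₁ ≤ k ∧ k ≤ j₁ ∧ W.getVert k = z) ∨ ∃ k, i₂ ≤ k ∧ k ≤ j₂ ∧ W.getVert k = z := by
    intro z
    rw [hP, support_append, support_cons, List.tail_cons, support_reverse, List.mem_append,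
      List.mem_reverse, mem_support_segment _ _ (by omega), mem_support_segment _ _ hjD]
  have hedges : ∀ e ∈ P.edges, e ∈ c.edges ∨ e = s(W.getVert j₁, W.getVert j₂) := by
    intro e he
    rw [hP, edges_append, edges_cons, edges_reverse, List.mem_append, List.mem_cons,
      List.mem_reverse] at he
    rcases he with he | rfl | he
    · exact Or.inl (edges_doubled_subset (edges_segment_subset _ _ he))
    · exact Or.inr rfl
    · exact Or.inl (edges_doubled_subset (edges_segment_subset _ _ he))
  refine hasShorterChordedCycle_of_isPath
    (W.isPath_append_cons_reverse_segment h₁.le h₂ h₃.le hjD hinj hb.adj) ha.adj.symm ?_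
    ((hsupp _).2 (.inl ⟨kx, by omega, by omega, rfl⟩))
    ((hsupp _).2 (.inr ⟨ky, by omega, by omega, rfl⟩)) hxy.adj ?_
    (hinj.sym2_mk_ne ⟨by omega, by omega⟩ ⟨by omega, by omega⟩ ⟨le_rfl, by omega⟩ (by omega)
      (by omega) _)
    (fun z hz => ?_) ?_
  · intro h
    rcases hedges _ h with h | h
    · exact ha.symm.notMem_edges h
    · exact hinj.sym2_mk_ne ⟨by omega, by omega⟩ ⟨by omega, by omega⟩ ⟨by omega, le_rfl⟩
        (by omega) (by omega) _ h
  · intro h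
    rcases hedges _ h with h | h
    · exact hxy.notMem_edges h
    · exact hinj.sym2_mk_ne ⟨by omega, by omega⟩ ⟨by omega, by omega⟩ ⟨by omega, le_rfl⟩
        (by omega) (by omega) _ h
  · obtain ⟨k, -, -, rfl⟩ | ⟨k, -, -, rfl⟩ := (hsupp z).1 hz <;>
    exact support_doubled_subset (W.getVert_mem_support k)
  · rw [length_append, length_cons, length_reverse, length_segment _ _ (by omega),
      length_segment _ _ hjD]
    omega

end Chords

section Positions

variable [DecidableEq V] {u : V} {c : G.Walk u u}

lemma exists_isChord_position_lt (hc : ¬ c.Nil) {e : Sym2 V} (he : c.IsChord e) :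
    ∃ x y, e = s(x, y) ∧ c.IsChord s(x, y) ∧ c.position x < c.position y := by
  induction e using Sym2.ind with
  | h a b =>
    rcases lt_trichotomy (c.position a) (c.position b) with hlt | heq | hgt
    · exact ⟨a, b, rfl, he, hlt⟩
    · exact absurd (eq_of_position_eq hc he.left_mem_support he.right_mem_support heq)
        he.adj.ne
    · exact ⟨b, a, Sym2.eq_swap, he.symm, hgt⟩

lemma IsChord.position_add_two_le (hc : ¬ c.Nil) {x y : V} (h : c.IsChord s(x, y))
    (hxy : c.position x < c.position y) :
    c.position x + 2 ≤ c.position y ∧ c.position y + 2 ≤ c.position x + c.length := by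
  have hy := position_lt_length hc h.right_mem_support
  constructor
  · by_contra hlt
    have := mk_getVert_doubled_mem_edges hc (k := c.position x) (by omega)
    rw [show c.position x + 1 = c.position y by omega,
      getVert_doubled_position hc h.left_mem_support,
      getVert_doubled_position hc h.right_mem_support] at this
    exact h.notMem_edges this
  · by_contra hlt
    have := mk_getVert_doubled_mem_edges hc (k := c.position y) (by omega)
    rw [show c.position y + 1 = c.position x + c.length by omega,
      getVert_doubled_position hc h.right_mem_support,
      getVert_doubled_position_add_length hc h.left_mem_support] at this
    exact h.symm.notMem_edges this

def Interlaced (c : G.Walk u u) (x y x' y' : V) : Prop :=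
  c.position x < c.position x' ∧ c.position x' < c.position y ∧ c.position y < c.position y'

lemma crossing_iff_interlaced {x y x' y' : V} (hxy : c.position x < c.position y)
    (hxy' : c.position x' < c.position y') :
    Crossing c s(x, y) s(x', y') ↔ c.Interlaced x y x' y' ∨ c.Interlaced x' y' x y := by
  constructor
  · rintro ⟨a, b, p, q, ⟨h, h'⟩ | ⟨h, h'⟩, h₁, h₂, h₃⟩ <;>
    · rcases Sym2.eq_iff.1 h with ⟨rfl, rfl⟩ | ⟨rfl, rfl⟩ <;>
      rcases Sym2.eq_iff.1 h' with ⟨rfl, rfl⟩ | ⟨rfl, rfl⟩ <;>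
      · simp only [Interlaced, position] at *
        omega
  · rintro (h | h)
    · exact ⟨x, y, x', y', Or.inl ⟨rfl, rfl⟩, h⟩
    · exact ⟨x', y', x, y, Or.inr ⟨rfl, rfl⟩, h⟩

lemma hasShorterChordedCycle_of_not_interlaced (hc : c.IsCycle) {x₁ y₁ x₂ y₂ : V}
    (h₁ : c.IsChord s(x₁, y₁)) (h₂ : c.IsChord s(x₂, y₂)) (hs₁ : c.position x₁ < c.position y₁)
    (hs₂ : c.position x₂ < c.position y₂) (hne : s(x₁, y₁) ≠ s(x₂, y₂))
    (h₁₂ : ¬ c.Interlaced x₁ y₁ x₂ y₂) (h₂₁ : ¬ c.Interlaced x₂ y₂ x₁ y₁) :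
    c.HasShorterChordedCycle := by
  wlog hx : c.position x₁ ≤ c.position x₂ generalizing x₁ y₁ x₂ y₂
  · exact this h₂ h₁ hs₂ hs₁ hne.symm h₂₁ h₁₂ (by omega)
  have hg₁ := h₁.position_add_two_le hc.not_nil hs₁
  have hg₂ := h₂.position_add_two_le hc.not_nil hs₂
  have hq₂ := position_lt_length hc.not_nil h₂.right_mem_support
  have hx₁ := getVert_doubled_position hc.not_nil h₁.left_mem_support
  have hx₁' := getVert_doubled_position_add_length hc.not_nil h₁.left_mem_support
  have hy₁ := getVert_doubled_position hc.not_nil h₁.right_mem_support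
  have hx₂ := getVert_doubled_position hc.not_nil h₂.left_mem_support
  have hy₂ := getVert_doubled_position hc.not_nil h₂.right_mem_support
  unfold Interlaced at h₁₂
  by_cases hy : c.position y₂ ≤ c.position y₁
  · exact hasShorterChordedCycle_of_chord_within_arc hc hs₁.le (by omega) (by omega) hx₁ hy₁ h₁
      h₂ hne.symm ⟨_, hx, by omega, hx₂⟩ ⟨_, by omega, hy, hy₂⟩
  by_cases hyx : c.position y₁ ≤ c.position x₂
  · exact hasShorterChordedCycle_of_chord_within_arc hc (by omega) (by omega) (by omega) hy₁ hx₁'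
      h₁.symm h₂ (fun h => hne (Sym2.eq_swap.trans h.symm))
      ⟨_, hyx, by omega, hx₂⟩ ⟨_, by omega, by omega, hy₂⟩
  · exact hasShorterChordedCycle_of_chord_within_arc hc hs₂.le (by omega) (by omega) hx₂ hy₂ h₂
      h₁ hne ⟨_, by omega, by omega, hx₁⟩ ⟨_, by omega, by omega, hy₁⟩

lemma hasShorterChordedCycle_of_interlaced_triple (hc : c.IsCycle) (hn : 7 ≤ c.length)
    {x₁ y₁ x₂ y₂ x₃ y₃ : V} (h₁ : c.IsChord s(x₁, y₁)) (h₂ : c.IsChord s(x₂, y₂))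
    (h₃ : c.IsChord s(x₃, y₃)) (h₁₂ : c.Interlaced x₁ y₁ x₂ y₂)
    (h₁₃ : c.Interlaced x₁ y₁ x₃ y₃) (h₂₃ : c.Interlaced x₂ y₂ x₃ y₃) :
    c.HasShorterChordedCycle := by
  unfold Interlaced at h₁₂ h₁₃ h₂₃
  have hq₃ := position_lt_length hc.not_nil h₃.right_mem_support
  have hx₁ := getVert_doubled_position hc.not_nil h₁.left_mem_support
  have hx₁' := getVert_doubled_position_add_length hc.not_nil h₁.left_mem_support
  have hy₁ := getVert_doubled_position hc.not_nil h₁.right_mem_support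
  have hx₂ := getVert_doubled_position hc.not_nil h₂.left_mem_support
  have hx₂' := getVert_doubled_position_add_length hc.not_nil h₂.left_mem_support
  have hy₂ := getVert_doubled_position hc.not_nil h₂.right_mem_support
  have hx₃ := getVert_doubled_position hc.not_nil h₃.left_mem_support
  have hy₃ := getVert_doubled_position hc.not_nil h₃.right_mem_support
  set n := c.length
  set p₁ := c.position x₁
  set q₁ := c.position y₁
  set p₂ := c.position x₂
  set q₂ := c.position y₂
  set p₃ := c.position x₃
  set q₃ := c.position y₃
  rcases (by omega : 3 ≤ q₁ - p₃ + (p₁ + n - q₃) ∨ 3 ≤ p₂ - p₁ + (q₂ - q₁) ∨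
      3 ≤ p₃ - p₂ + (q₃ - q₂)) with hgap | hgap | hgap
  · exact hasShorterChordedCycle_of_chord_between_arcs hc (by omega) (by omega) (by omega)
      (by omega) (by omega) (by omega) hx₁ hx₃ hy₁ hy₃ h₁ h₃ h₂
      ⟨_, by omega, by omega, hx₂⟩ ⟨_, by omega, by omega, hy₂⟩
  · exact hasShorterChordedCycle_of_chord_between_arcs hc (by omega) (by omega) (by omega)
      (by omega) (by omega) (by omega) hx₂ hy₁ hy₂ hx₁' h₂ h₁.symm h₃
      ⟨_, by omega, by omega, hx₃⟩ ⟨_, by omega, by omega, hy₃⟩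
  · exact hasShorterChordedCycle_of_chord_between_arcs hc (by omega) (by omega) (by omega)
      (by omega) (by omega) (by omega) hx₃ hy₂ hy₃ hx₂' h₃ h₂.symm h₁.symm
      ⟨_, by omega, by omega, hy₁⟩ ⟨_, by omega, by omega, hx₁'⟩

lemma hasShorterChordedCycle_of_pairwise_interlaced (hc : c.IsCycle) (hn : 7 ≤ c.length)
    {x₁ y₁ x₂ y₂ x₃ y₃ : V} (h₁ : c.IsChord s(x₁, y₁)) (h₂ : c.IsChord s(x₂, y₂))
    (h₃ : c.IsChord s(x₃, y₃)) (h₁₂ : c.Interlaced x₁ y₁ x₂ y₂ ∨ c.Interlaced x₂ y₂ x₁ y₁)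
    (h₁₃ : c.Interlaced x₁ y₁ x₃ y₃ ∨ c.Interlaced x₃ y₃ x₁ y₁)
    (h₂₃ : c.Interlaced x₂ y₂ x₃ y₃ ∨ c.Interlaced x₃ y₃ x₂ y₂) :
    c.HasShorterChordedCycle := by
  rcases h₁₂ with h₁₂ | h₁₂ <;> rcases h₁₃ with h₁₃ | h₁₃ <;> rcases h₂₃ with h₂₃ | h₂₃ <;>
  first
  | exact hasShorterChordedCycle_of_interlaced_triple hc hn h₁ h₂ h₃ ‹_› ‹_› ‹_›
  | exact hasShorterChordedCycle_of_interlaced_triple hc hn h₁ h₃ h₂ ‹_› ‹_› ‹_›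
  | exact hasShorterChordedCycle_of_interlaced_triple hc hn h₂ h₁ h₃ ‹_› ‹_› ‹_›
  | exact hasShorterChordedCycle_of_interlaced_triple hc hn h₂ h₃ h₁ ‹_› ‹_› ‹_›
  | exact hasShorterChordedCycle_of_interlaced_triple hc hn h₃ h₁ h₂ ‹_› ‹_› ‹_›
  | exact hasShorterChordedCycle_of_interlaced_triple hc hn h₃ h₂ h₁ ‹_› ‹_› ‹_›
  | (unfold Interlaced at h₁₂ h₁₃ h₂₃; omega)

theorem crossing_of_not_hasShorterChordedCycle (hc : c.IsCycle)
    (hmin : ¬ c.HasShorterChordedCycle) {e₁ e₂ : Sym2 V} (he₁ : c.IsChord e₁)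
    (he₂ : c.IsChord e₂) (hne : e₁ ≠ e₂) : Crossing c e₁ e₂ := by
  obtain ⟨x₁, y₁, rfl, h₁, hs₁⟩ := exists_isChord_position_lt hc.not_nil he₁
  obtain ⟨x₂, y₂, rfl, h₂, hs₂⟩ := exists_isChord_position_lt hc.not_nil he₂
  rw [crossing_iff_interlaced hs₁ hs₂]
  by_contra! h
  exact hmin (hasShorterChordedCycle_of_not_interlaced hc h₁ h₂ hs₁ hs₂ hne h.1 h.2)

theorem ncard_setOf_isChord_le_two (hc : c.IsCycle) (hn : 7 ≤ c.length)
    (hmin : ¬ c.HasShorterChordedCycle) : {e | c.IsChord e}.ncard ≤ 2 := by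
  by_contra! h
  obtain ⟨e₁, e₂, e₃, he₁, he₂, he₃, h₁₂, h₁₃, h₂₃⟩ :=
    (Set.two_lt_ncard_iff (Set.finite_of_ncard_pos (by omega))).1 h
  obtain ⟨x₁, y₁, rfl, h₁, hs₁⟩ := exists_isChord_position_lt hc.not_nil he₁
  obtain ⟨x₂, y₂, rfl, h₂, hs₂⟩ := exists_isChord_position_lt hc.not_nil he₂
  obtain ⟨x₃, y₃, rfl, h₃, hs₃⟩ := exists_isChord_position_lt hc.not_nil he₃
  have hcross : ∀ {e e'}, c.IsChord e → c.IsChord e' → e ≠ e' → Crossing c e e' :=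
    crossing_of_not_hasShorterChordedCycle hc hmin
  exact hmin (hasShorterChordedCycle_of_pairwise_interlaced hc hn h₁ h₂ h₃
    ((crossing_iff_interlaced hs₁ hs₂).1 (hcross h₁ h₂ h₁₂))
    ((crossing_iff_interlaced hs₁ hs₃).1 (hcross h₁ h₃ h₁₃))
    ((crossing_iff_interlaced hs₂ hs₃).1 (hcross h₂ h₃ h₂₃)))

end Positions

/-- Swapping `D` in for `c i` is done on the family of pairs `⟨v j, c j⟩`, which avoids
transporting walks along the dependent type of `c`. -/
theorem not_hasShorterChordedCycle_of_minimal {ι : Type*} [Fintype ι] {v : ι → V}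
    {c : ∀ i, G.Walk (v i) (v i)}
    (hcyc : ∀ i, (c i).IsCycle ∧ HasChord G (c i))
    (hdisj : ∀ i j, i ≠ j → ∀ x, x ∈ (c i).support → x ∉ (c j).support)
    (hmin : ∀ (w : ι → V) (d : ∀ i, G.Walk (w i) (w i)),
      (∀ i, (d i).IsCycle ∧ HasChord G (d i)) →
      (∀ i j, i ≠ j → ∀ x, x ∈ (d i).support → x ∉ (d j).support) →
      ∑ i, (c i).length ≤ ∑ i, (d i).length) (i : ι) :
    ¬ (c i).HasShorterChordedCycle := by
  classical
  rintro ⟨z, D, hD, hDchord, hDsub, hDlen⟩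
  let f : ι → Σ x, G.Walk x x := Function.update (fun j => ⟨v j, c j⟩) i ⟨z, D⟩
  have hfi : f i = ⟨z, D⟩ := Function.update_self ..
  have hfj : ∀ j ≠ i, f j = ⟨v j, c j⟩ := fun j hj => Function.update_of_ne hj ..
  have hlen : (fun j => (f j).2.length) = Function.update (fun j => (c j).length) i D.length := by
    funext j
    by_cases hj : j = i
    · subst hj
      rw [hfi, Function.update_self]
    · rw [hfj j hj, Function.update_of_ne hj]
  have hsub : ∀ j, (f j).2.support ⊆ (c j).support := by
    intro j
    by_cases hj : j = i
    · subst hj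
      rw [hfi]
      exact hDsub
    · rw [hfj j hj]
      exact List.Subset.refl _
  have := hmin (fun j => (f j).1) (fun j => (f j).2) (fun j => ?_)
    (fun j k hjk x hx hx' => hdisj j k hjk x (hsub j hx) (hsub k hx'))
  · rw [hlen, Finset.sum_update_of_mem (Finset.mem_univ i),
      Finset.sum_eq_add_sum_sdiff_singleton_of_mem (Finset.mem_univ i)] at this
    omega
  · by_cases hj : j = i
    · subst hj
      rw [hfi]
      exact ⟨hD, hDchord⟩
    · rw [hfj j hj]
      exact hcyc j

end SimpleGraph.Walk

/-- In a minimal set of r vertex-disjoint chorded cycles, any cycle of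
length at least 7 has at most two chords, and if it has two chords they cross. -/
theorem stmt_7 {V : Type*} [DecidableEq V] (G : SimpleGraph V) (r : ℕ)
    (v : Fin r → V) (c : ∀ i, G.Walk (v i) (v i))
    (hcyc : ∀ i, (c i).IsCycle ∧ HasChord G (c i))
    (hdisj : ∀ i j, i ≠ j → ∀ x, x ∈ (c i).support → x ∉ (c j).support)
    (hmin : ∀ (w : Fin r → V) (d : ∀ i, G.Walk (w i) (w i)),
      (∀ i, (d i).IsCycle ∧ HasChord G (d i)) →
      (∀ i j, i ≠ j → ∀ x, x ∈ (d i).support → x ∉ (d j).support) →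
      ∑ i, (c i).length ≤ ∑ i, (d i).length)
    (i : Fin r) (hlen : 7 ≤ (c i).length) :
    {e : Sym2 V | e ∈ G.edgeSet ∧ (∀ x ∈ e, x ∈ (c i).support) ∧ e ∉ (c i).edges}.ncard ≤ 2 ∧
    ∀ e₁ ∈ {e : Sym2 V | e ∈ G.edgeSet ∧ (∀ x ∈ e, x ∈ (c i).support) ∧ e ∉ (c i).edges},
      ∀ e₂ ∈ {e : Sym2 V | e ∈ G.edgeSet ∧ (∀ x ∈ e, x ∈ (c i).support) ∧ e ∉ (c i).edges},
        e₁ ≠ e₂ → Crossing (c i) e₁ e₂ := by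
  simp only [← SimpleGraph.Walk.isChord_iff_forall_mem_support]
  have hc := (hcyc i).1
  have hshort := SimpleGraph.Walk.not_hasShorterChordedCycle_of_minimal hcyc hdisj hmin i
  exact ⟨SimpleGraph.Walk.ncard_setOf_isChord_le_two hc hlen hshort,
    fun e₁ he₁ e₂ he₂ => SimpleGraph.Walk.crossing_of_not_hasShorterChordedCycle hc hshort he₁ he₂⟩
end

section
/- Let C₁, ..., C_r be a set of r vertex-disjoint chorded cycles in a graph G minimizing the total number of vertices used, and let x be a vertex of G outside all the cycles. Then x has at most 4 neighbors in each C_i; moreover, if x has exactly 4 neighbors in some C_i then |C_i| = 4, and if x has exactly 3 neighbors in some C_i then |C_i| ≤ 6. -/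
open SimpleGraph Walk

section

variable {V : Type*} {G : SimpleGraph V}

namespace SimpleGraph.Walk

lemma hasChord_copy {u u' : V} (p : G.Walk u u) (h : u = u') :
    HasChord G (p.copy h h) ↔ HasChord G p := by
  subst h; rfl

section

variable {x y y' m : V} {Q : G.Walk y y'}

lemma isCycle_cons_concat (hQ : Q.IsPath) (hx : x ∉ Q.support) (hy : G.Adj x y)
    (hy' : G.Adj y' x) (hne : y ≠ y') : (cons hy (Q.concat hy')).IsCycle := by
  rw [cons_isCycle_iff, edges_concat, List.concat_eq_append]
  refine ⟨hQ.concat hx hy', fun h => ?_⟩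
  rcases List.mem_append.mp h with h | h
  · exact hx (fst_mem_support_of_mem_edges Q h)
  · rw [List.mem_singleton, Sym2.eq_iff] at h
    rcases h with ⟨rfl, -⟩ | ⟨-, rfl⟩
    · exact hx Q.end_mem_support
    · exact hne rfl

lemma hasChord_cons_concat (hx : x ∉ Q.support) (hy : G.Adj x y) (hy' : G.Adj y' x)
    (hm : m ∈ Q.support) (hmy : m ≠ y) (hmy' : m ≠ y') (hxm : G.Adj x m) :
    HasChord G (cons hy (Q.concat hy')) := by
  refine ⟨x, m, start_mem_support _, by simp [hm], hxm, fun h => ?_⟩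
  rw [edges_cons, edges_concat, List.concat_eq_append, List.mem_cons, List.mem_append,
    List.mem_singleton, Sym2.eq_iff, Sym2.eq_iff] at h
  rcases h with (⟨-, rfl⟩ | ⟨-, rfl⟩) | h | ⟨-, rfl⟩ | ⟨-, rfl⟩
  · exact hmy rfl
  · exact hx hm
  · exact hx (fst_mem_support_of_mem_edges Q h)
  · exact hx hm
  · exact hmy' rfl

end

theorem IsCycle.isPath_drop_append_take {a : V} {C : G.Walk a a} (hC : C.IsCycle) {p q : ℕ}
    (hpq : p < q) (hq : q ≤ C.length) : ((C.drop q).append (C.take p)).IsPath := by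
  obtain ⟨k, rfl⟩ : ∃ k, q = k + 1 := ⟨q - 1, by omega⟩
  rw [isPath_def, support_append, drop_support_eq_support_drop_min, support_take,
    min_eq_left hq, ← cons_tail_support C, List.drop_succ_cons, List.take_succ_cons,
    List.tail_cons, List.nodup_append_comm]
  refine hC.support_nodup.sublist ?_
  have hsub := (List.Sublist.refl (C.support.tail.take p)).append
    (C.support.tail.drop_sublist_drop_left (show p ≤ k by omega))
  rwa [List.take_append_drop] at hsub

end SimpleGraph.Walk

theorem length_le_of_minimal {r : ℕ} {v : Fin r → V} {c : ∀ i, G.Walk (v i) (v i)}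
    (hcyc : ∀ i, (c i).IsCycle ∧ HasChord G (c i))
    (hdisj : ∀ i j, i ≠ j → ∀ x, x ∈ (c i).support → x ∉ (c j).support)
    (hmin : ∀ (w : Fin r → V) (d : ∀ i, G.Walk (w i) (w i)),
      (∀ i, (d i).IsCycle ∧ HasChord G (d i)) →
      (∀ i j, i ≠ j → ∀ x, x ∈ (d i).support → x ∉ (d j).support) →
      ∑ i, (c i).length ≤ ∑ i, (d i).length)
    (i : Fin r) {u : V} (D : G.Walk u u) (hD : D.IsCycle) (hDchord : HasChord G D)
    (hDdisj : ∀ j, j ≠ i → ∀ y ∈ D.support, y ∉ (c j).support) :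
    (c i).length ≤ D.length := by
  classical
  let w := Function.update v i u
  let d : ∀ j, G.Walk (w j) (w j) := fun j =>
    if h : j = i then D.copy (by simp [w, h]) (by simp [w, h])
    else (c j).copy (by simp [w, h]) (by simp [w, h])
  have hd_self : d i = D.copy (by simp [w]) (by simp [w]) := dif_pos rfl
  have hd_ne {j} (h : j ≠ i) : d j = (c j).copy (by simp [w, h]) (by simp [w, h]) := dif_neg h
  have hdcyc (j) : (d j).IsCycle ∧ HasChord G (d j) := by
    by_cases h : j = i
    · subst h; rw [hd_self, isCycle_copy, hasChord_copy]; exact ⟨hD, hDchord⟩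
    · rw [hd_ne h, isCycle_copy, hasChord_copy]; exact hcyc j
  have hddisj (j k) (hjk : j ≠ k) (y) (hyj : y ∈ (d j).support) : y ∉ (d k).support := by
    by_cases hj : j = i <;> by_cases hk : k = i
    · exact absurd (hj.trans hk.symm) hjk
    · subst hj; rw [hd_self, support_copy] at hyj; rw [hd_ne hk, support_copy]
      exact hDdisj k hk y hyj
    · subst hk; rw [hd_ne hj, support_copy] at hyj; rw [hd_self, support_copy]
      exact fun hy => hDdisj j hj y hy hyj
    · rw [hd_ne hj, support_copy] at hyj; rw [hd_ne hk, support_copy]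
      exact hdisj j k hjk y hyj
  have hlen : (fun j => (d j).length) = Function.update (fun j => (c j).length) i D.length := by
    funext j
    by_cases h : j = i
    · subst h; simp [hd_self]
    · simp [hd_ne h, h]
  have := hmin w d hdcyc hddisj
  rw [hlen, Finset.sum_update_of_mem (Finset.mem_univ i),
    ← Finset.add_sum_erase _ _ (Finset.mem_univ i), Finset.sdiff_singleton_eq_erase] at this
  omega

open Finset in
lemma card_le_three_of_gap_bounds {T : Finset ℕ} {n : ℕ} (hT : ∀ p ∈ T, 0 < p ∧ p < n)
    (h : ∀ p ∈ T, ∀ q ∈ T, p < q → n ≤ q + 2 ∧ p ≤ 2 ∧ q ≤ p + 2) :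
    #T ≤ 3 ∧ (#T = 3 → n = 4) ∧ (#T = 2 → n ≤ 6) := by
  have hsym : ∀ p ∈ T, ∀ q ∈ T, p ≠ q →
      n ≤ max p q + 2 ∧ min p q ≤ 2 ∧ max p q ≤ min p q + 2 ∧ 0 < min p q ∧ max p q < n := by
    intro p hp q hq hpq
    rcases lt_or_gt_of_ne hpq with hlt | hlt
    · have := h p hp q hq hlt; have := hT p hp; have := hT q hq; omega
    · have := h q hq p hp hlt; have := hT p hp; have := hT q hq; omega
  refine ⟨?_, fun h3 => ?_, fun h2 => ?_⟩
  · rcases T.eq_empty_or_nonempty with rfl | hne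
    · simp
    have hsub : T ⊆ insert (T.max' hne) {1, 2} := by
      intro p hp
      rcases (T.le_max' p hp).eq_or_lt with hmax | hlt
      · simp [hmax]
      · have := (h p hp _ (T.max'_mem hne) hlt).2.1; have := (hT p hp).1
        interval_cases p <;> simp
    exact (card_le_card hsub).trans ((card_insert_le _ _).trans (by decide))
  · obtain ⟨p, q, s, hpq, hps, hqs, rfl⟩ := card_eq_three.mp h3
    have := hsym p (by simp) q (by simp) hpq
    have := hsym p (by simp) s (by simp) hps
    have := hsym q (by simp) s (by simp) hqs
    omega
  · obtain ⟨p, q, hpq, rfl⟩ := card_eq_two.mp h2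
    have := hsym p (by simp) q (by simp) hpq
    omega

open Finset in
lemma ncard_support_filter_eq_card {u : V} {C : G.Walk u u} (hC : C.IsCycle) (P : V → Prop)
    [DecidablePred P] :
    {y | y ∈ C.support ∧ P y}.ncard = #{p ∈ range C.length | P (C.getVert p)} := by
  have hlen := hC.three_le_length
  have himage :
      {y | y ∈ C.support ∧ P y} = C.getVert '' ↑{p ∈ range C.length | P (C.getVert p)} := by
    ext y
    simp only [Set.mem_ofPred_eq, coe_filter, mem_range, Set.mem_image]
    constructor
    · rintro ⟨hy, hPy⟩
      obtain ⟨k, rfl, hk⟩ := mem_support_iff_exists_getVert.mp hy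
      rcases hk.lt_or_eq with hk | rfl
      · exact ⟨k, ⟨hk, hPy⟩, rfl⟩
      · exact ⟨0, ⟨by omega, by simpa using hPy⟩, by simp⟩
    · rintro ⟨p, ⟨-, hPp⟩, rfl⟩
      exact ⟨C.getVert_mem_support p, hPp⟩
  rw [himage, Set.InjOn.ncard_image, Set.ncard_coe_finset]
  exact hC.getVert_injOn'.mono fun p hp => by
    simp only [coe_filter, mem_range, Set.mem_ofPred_eq] at hp ⊢; omega

def NoShorterChordedCycleVia {u : V} (C : G.Walk u u) (x : V) : Prop :=
  ∀ D : G.Walk x x, D.IsCycle → HasChord G D → (∀ y ∈ D.support, y = x ∨ y ∈ C.support) →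
    C.length ≤ D.length

namespace NoShorterChordedCycleVia

variable {u x : V} {C : G.Walk u u}

lemma rotate [DecidableEq V] (hC : NoShorterChordedCycleVia C x) {a : V} (ha : a ∈ C.support) :
    NoShorterChordedCycleVia (C.rotate a ha) x := fun D hD hDchord hDsub => by
  simpa using hC D hD hDchord (by simpa only [mem_support_rotate_iff] using hDsub)

lemma length_le_of_isPath (hC : NoShorterChordedCycleVia C x) (hx : x ∉ C.support)
    {y y' m : V} {Q : G.Walk y y'} (hQ : Q.IsPath) (hQC : ∀ z ∈ Q.support, z ∈ C.support)
    (hy : G.Adj x y) (hy' : G.Adj x y') (hm : m ∈ Q.support) (hmy : m ≠ y) (hmy' : m ≠ y')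
    (hxm : G.Adj x m) : C.length ≤ Q.length + 2 := by
  have hxQ : x ∉ Q.support := fun h => hx (hQC x h)
  have hne : y ≠ y' := by
    rintro rfl
    rw [nil_iff_support_eq.mp (isPath_iff_nil.mp hQ), List.mem_singleton] at hm
    exact hmy hm
  have hsub : ∀ z ∈ (cons hy (Q.concat hy'.symm)).support, z = x ∨ z ∈ C.support := by
    simp only [support_cons, support_concat, List.mem_cons, List.mem_append, List.not_mem_nil]
    rintro z (rfl | hz | rfl | hz)
    exacts [.inl rfl, .inr (hQC z hz), .inl rfl, hz.elim]
  simpa using hC _ (isCycle_cons_concat hQ hxQ hy hy'.symm hne)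
    (hasChord_cons_concat hxQ hy hy'.symm hm hmy hmy' hxm) hsub

lemma gap_bounds {a : V} {C : G.Walk a a} (hC : NoShorterChordedCycleVia C x) (hcyc : C.IsCycle)
    (hx : x ∉ C.support) (ha : G.Adj x a) {p q : ℕ} (hp : 0 < p) (hpq : p < q)
    (hq : q < C.length) (hxp : G.Adj x (C.getVert p)) (hxq : G.Adj x (C.getVert q)) :
    C.length ≤ q + 2 ∧ p ≤ 2 ∧ q ≤ p + 2 := by
  have hpa : C.getVert p ≠ a := by rw [Ne, hcyc.getVert_endpoint_iff (by omega)]; omega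
  have hqa : C.getVert q ≠ a := by rw [Ne, hcyc.getVert_endpoint_iff (by omega)]; omega
  have hpq' : C.getVert p ≠ C.getVert q := fun h => by
    have := hcyc.getVert_injOn' (show p ≤ C.length - 1 by omega) (show q ≤ C.length - 1 by omega) h
    omega
  refine ⟨?_, ?_, ?_⟩
  · have hm : C.getVert p ∈ (C.take q).support := by
      simpa [min_eq_right hpq.le] using (C.take q).getVert_mem_support p
    simpa [min_eq_left hq.le] using hC.length_le_of_isPath hx (hcyc.isPath_take hq)
      (fun z hz => (C.isSubwalk_take q).support_subset hz) ha hxq hm hpa hpq' hxp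
  · have hm : C.getVert q ∈ (C.drop p).support := by
      simpa [Nat.add_sub_cancel' hpq.le] using (C.drop p).getVert_mem_support (q - p)
    have := hC.length_le_of_isPath hx (hcyc.isPath_drop hp)
      (fun z hz => (C.isSubwalk_drop p).support_subset hz) hxp ha hm hpq'.symm hqa hxq
    simp only [drop_length] at this
    omega
  · have hm : a ∈ ((C.drop q).append (C.take p)).support :=
      (mem_support_append_iff _ _).mpr (.inr (C.take p).start_mem_support)
    have hQC : ∀ z ∈ ((C.drop q).append (C.take p)).support, z ∈ C.support := by
      intro z hz
      rcases (mem_support_append_iff _ _).mp hz with hz | hz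
      exacts [(C.isSubwalk_drop q).support_subset hz, (C.isSubwalk_take p).support_subset hz]
    have := hC.length_le_of_isPath hx (hcyc.isPath_drop_append_take hpq hq.le) hQC hxq hxp hm
      hqa.symm hpa.symm ha
    simp only [length_append, drop_length, take_length] at this
    omega

open Finset in
theorem ncard_adj_bounds (hC : NoShorterChordedCycleVia C x) (hcyc : C.IsCycle)
    (hx : x ∉ C.support) :
    {y | y ∈ C.support ∧ G.Adj x y}.ncard ≤ 4 ∧
      ({y | y ∈ C.support ∧ G.Adj x y}.ncard = 4 → C.length = 4) ∧
      ({y | y ∈ C.support ∧ G.Adj x y}.ncard = 3 → C.length ≤ 6) := by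
  classical
  by_cases hN : ∃ a ∈ C.support, G.Adj x a
  swap
  · push Not at hN
    have : {y | y ∈ C.support ∧ G.Adj x y} = ∅ := by
      ext y; simpa using hN y
    simp [this]
  obtain ⟨a, haC, ha⟩ := hN
  have hN' : {y | y ∈ C.support ∧ G.Adj x y} =
      {y | y ∈ (C.rotate a haC).support ∧ G.Adj x y} := by
    simp only [mem_support_rotate_iff]
  rw [hN', ncard_support_filter_eq_card (hcyc.rotate haC), length_rotate]
  set S := {p ∈ range C.length | G.Adj x ((C.rotate a haC).getVert p)}
  have h0 : 0 ∈ S := by simpa [S] using ⟨by linarith [hcyc.three_le_length], ha⟩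
  rw [← insert_erase h0, card_insert_of_notMem (notMem_erase 0 S)]
  obtain ⟨h1, h2, h3⟩ := card_le_three_of_gap_bounds (T := S.erase 0) (n := C.length)
    (fun p hp => by simp only [S, mem_erase, mem_filter, mem_range] at hp; omega)
    (fun p hp q hq hpq => by
      simp only [S, mem_erase, mem_filter, mem_range] at hp hq
      simpa using (hC.rotate haC).gap_bounds (hcyc.rotate haC) (by rwa [mem_support_rotate_iff])
        ha (by omega) hpq (by simpa using hq.2.1) hp.2.2 hq.2.2)
  exact ⟨by omega, fun h => h2 (by omega), fun h => h3 (by omega)⟩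

end NoShorterChordedCycleVia

end

/-- In a minimal set of r vertex-disjoint chorded cycles, any outside
vertex x has at most 4 neighbors in each cycle; 4 neighbors forces a 4-cycle and
3 neighbors forces a cycle of length at most 6. -/
theorem stmt_8 {V : Type*} (G : SimpleGraph V) (r : ℕ)
    (v : Fin r → V) (c : ∀ i, G.Walk (v i) (v i))
    (hcyc : ∀ i, (c i).IsCycle ∧ HasChord G (c i))
    (hdisj : ∀ i j, i ≠ j → ∀ x, x ∈ (c i).support → x ∉ (c j).support)
    (hmin : ∀ (w : Fin r → V) (d : ∀ i, G.Walk (w i) (w i)),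
      (∀ i, (d i).IsCycle ∧ HasChord G (d i)) →
      (∀ i j, i ≠ j → ∀ x, x ∈ (d i).support → x ∉ (d j).support) →
      ∑ i, (c i).length ≤ ∑ i, (d i).length)
    (x : V) (hx : ∀ i, x ∉ (c i).support) :
    ∀ i : Fin r,
      {y : V | y ∈ (c i).support ∧ G.Adj x y}.ncard ≤ 4 ∧
      ({y : V | y ∈ (c i).support ∧ G.Adj x y}.ncard = 4 → (c i).length = 4) ∧
      ({y : V | y ∈ (c i).support ∧ G.Adj x y}.ncard = 3 → (c i).length ≤ 6) := by
  intro i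
  have hC : NoShorterChordedCycleVia (c i) x := fun D hD hDchord hDsub =>
    length_le_of_minimal hcyc hdisj hmin i D hD hDchord fun j hj y hy => by
      rcases hDsub y hy with rfl | hy
      exacts [hx j, hdisj i j hj.symm y hy]
  exact hC.ncard_adj_bounds (hcyc i).1 (hx i)
end

section
/- For all k ≥ 1 and t ≥ 1, the complete bipartite graph K_{3k−1, m} with m ≥ 3k−1 contains no k vertex-disjoint chorded cycles, and σ_t(K_{3k−1,m}) = t(3k−1) when m ≥ t. -/
open SimpleGraph

namespace SimpleGraph

variable {V α β : Type*}

theorem Walk.IsCycle.three_le_ncard_neighborSet_inter_support {G : SimpleGraph V} {u v w : V}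
    {c : G.Walk u u} (hc : c.IsCycle) (hv : v ∈ c.support) (hw : w ∈ c.support)
    (hvw : G.Adj v w) (hchord : s(v, w) ∉ c.edges) :
    3 ≤ (G.neighborSet v ∩ {x | x ∈ c.support}).ncard := by
  have hw_off : w ∉ c.toSubgraph.neighborSet v := fun h =>
    hchord (c.adj_toSubgraph_iff_mem_edges.mp h)
  have hsub : insert w (c.toSubgraph.neighborSet v) ⊆ G.neighborSet v ∩ {x | x ∈ c.support} := by
    rintro x (rfl | hx)
    · exact ⟨hvw, hw⟩
    · exact ⟨c.toSubgraph.adj_sub hx, c.mem_verts_toSubgraph.mp (c.toSubgraph.edge_vert hx.symm)⟩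
  calc 3 = (insert w (c.toSubgraph.neighborSet v)).ncard := by
        rw [Set.ncard_insert_of_notMem hw_off (c.finite_neighborSet_toSubgraph),
          hc.ncard_neighborSet_toSubgraph_eq_two hv]
    _ ≤ _ := Set.ncard_le_ncard hsub (c.support.finite_toSet.inter_of_right _)

theorem completeBipartiteGraph_neighborSet_inl (x : α) :
    (completeBipartiteGraph α β).neighborSet (Sum.inl x) = Set.range Sum.inr := by
  ext (_ | _) <;> simp

theorem completeBipartiteGraph_neighborSet_inr (y : β) :
    (completeBipartiteGraph α β).neighborSet (Sum.inr y) = Set.range Sum.inl := by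
  ext (_ | _) <;> simp

theorem ncard_neighborSet_completeBipartiteGraph_inl (x : α) :
    ((completeBipartiteGraph α β).neighborSet (Sum.inl x)).ncard = Nat.card β := by
  rw [completeBipartiteGraph_neighborSet_inl, Set.ncard_range_of_injective Sum.inr_injective]

theorem ncard_neighborSet_completeBipartiteGraph_inr (y : β) :
    ((completeBipartiteGraph α β).neighborSet (Sum.inr y)).ncard = Nat.card α := by
  rw [completeBipartiteGraph_neighborSet_inr, Set.ncard_range_of_injective Sum.inl_injective]

theorem HasChord.three_le_ncard_left {u : α ⊕ β} {c : (completeBipartiteGraph α β).Walk u u}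
    (hc : c.IsCycle) (hch : HasChord _ c) :
    3 ≤ {x : α | Sum.inl x ∈ c.support}.ncard := by
  suffices ∀ l r, Sum.inl l ∈ c.support → Sum.inr r ∈ c.support →
      s(Sum.inr r, Sum.inl l) ∉ c.edges → 3 ≤ {x : α | Sum.inl x ∈ c.support}.ncard by
    obtain ⟨a | a, b | b, ha, hb, hab, hchord⟩ := hch
    · simp at hab
    · exact this a b ha hb (by rwa [Sym2.eq_swap])
    · exact this b a hb ha hchord
    · simp at hab
  intro l r hl hr hchord
  have h := hc.three_le_ncard_neighborSet_inter_support hr hl (by simp) hchord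
  rwa [completeBipartiteGraph_neighborSet_inr, ← Set.ncard_preimage_of_injective_subset_range
    Sum.inl_injective Set.inter_subset_left, Set.preimage_inter, Set.preimage_range,
    Set.univ_inter] at h

theorem three_mul_card_le_of_disjoint_chorded_cycles [Finite α] {ι : Type*} [Fintype ι]
    {v : ι → α ⊕ β} (c : ∀ i, (completeBipartiteGraph α β).Walk (v i) (v i))
    (hc : ∀ i, (c i).IsCycle ∧ HasChord _ (c i))
    (hdisj : ∀ i j, i ≠ j → ∀ x, x ∈ (c i).support → x ∉ (c j).support) :
    3 * Fintype.card ι ≤ Nat.card α := by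
  set L : ι → Set α := fun i => {x | Sum.inl x ∈ (c i).support}
  have hL : Pairwise (Function.onFun Disjoint L) := fun i j hij =>
    Set.disjoint_left.mpr fun x hi hj => hdisj i j hij _ hi hj
  calc 3 * Fintype.card ι = ∑ _i : ι, 3 := by simp [mul_comm]
    _ ≤ ∑ i, (L i).ncard := Finset.sum_le_sum fun i _ => (hc i).2.three_le_ncard_left (hc i).1
    _ = (⋃ i, L i).ncard := by
      rw [Set.ncard_iUnion_of_finite (fun _ => Set.toFinite _) hL, finsum_eq_sum_of_fintype]
    _ ≤ Nat.card α := Set.ncard_le_card _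

theorem card_left_le_ncard_neighborSet_completeBipartiteGraph (h : Nat.card α ≤ Nat.card β)
    (v : α ⊕ β) : Nat.card α ≤ ((completeBipartiteGraph α β).neighborSet v).ncard := by
  cases v with
  | inl x => rwa [ncard_neighborSet_completeBipartiteGraph_inl]
  | inr y => rw [ncard_neighborSet_completeBipartiteGraph_inr]

end SimpleGraph

theorem stmt_11_general (k t m : ℕ) (hk : 1 ≤ k)
    (hm₁ : 3 * k - 1 ≤ m) (hm₂ : t ≤ m) :
    (¬ ∃ (v : Fin k → (Fin (3 * k - 1) ⊕ Fin m))
        (c : ∀ i, (completeBipartiteGraph (Fin (3 * k - 1)) (Fin m)).Walk (v i) (v i)),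
        (∀ i, (c i).IsCycle ∧ HasChord (completeBipartiteGraph (Fin (3 * k - 1)) (Fin m)) (c i)) ∧
        ∀ i j, i ≠ j → ∀ x, x ∈ (c i).support → x ∉ (c j).support) ∧
    IsLeast {s : ℕ | ∃ I : Finset (Fin (3 * k - 1) ⊕ Fin m), I.card = t ∧
        (∀ x ∈ I, ∀ y ∈ I, x ≠ y →
          ¬ (completeBipartiteGraph (Fin (3 * k - 1)) (Fin m)).Adj x y) ∧
        s = ∑ v ∈ I, ((completeBipartiteGraph (Fin (3 * k - 1)) (Fin m)).neighborSet v).ncard}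
      (t * (3 * k - 1)) := by
  refine ⟨?_, ?_, ?_⟩
  · rintro ⟨v, c, hc, hdisj⟩
    have := three_mul_card_le_of_disjoint_chorded_cycles c hc hdisj
    simp only [Fintype.card_fin, Nat.card_eq_fintype_card] at this
    omega
  · obtain ⟨s, -, hs⟩ := Finset.exists_subset_card_eq (s := (Finset.univ : Finset (Fin m)))
      (by simpa using hm₂)
    refine ⟨s.map .inr, by simpa, ?_, ?_⟩
    · simp
    · simp [ncard_neighborSet_completeBipartiteGraph_inr, hs]
  · rintro _ ⟨I, rfl, -, rfl⟩
    have hdeg := card_left_le_ncard_neighborSet_completeBipartiteGraph (α := Fin (3 * k - 1))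
      (β := Fin m) (by simpa using hm₁)
    simp only [Nat.card_eq_fintype_card, Fintype.card_fin] at hdeg
    simpa using Finset.card_nsmul_le_sum I _ _ fun v _ => hdeg v

/-- K_{3k−1,m} with m ≥ 3k−1 contains no k vertex-disjoint chorded
cycles, and σ_t(K_{3k−1,m}) = t(3k−1) when m ≥ t. -/
theorem stmt_11 (k t m : ℕ) (hk : 1 ≤ k) (ht : 1 ≤ t)
    (hm₁ : 3 * k - 1 ≤ m) (hm₂ : t ≤ m) :
    (¬ ∃ (v : Fin k → (Fin (3 * k - 1) ⊕ Fin m))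
        (c : ∀ i, (completeBipartiteGraph (Fin (3 * k - 1)) (Fin m)).Walk (v i) (v i)),
        (∀ i, (c i).IsCycle ∧ HasChord (completeBipartiteGraph (Fin (3 * k - 1)) (Fin m)) (c i)) ∧
        ∀ i j, i ≠ j → ∀ x, x ∈ (c i).support → x ∉ (c j).support) ∧
    IsLeast {s : ℕ | ∃ I : Finset (Fin (3 * k - 1) ⊕ Fin m), I.card = t ∧
        (∀ x ∈ I, ∀ y ∈ I, x ≠ y →
          ¬ (completeBipartiteGraph (Fin (3 * k - 1)) (Fin m)).Adj x y) ∧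
        s = ∑ v ∈ I, ((completeBipartiteGraph (Fin (3 * k - 1)) (Fin m)).neighborSet v).ncard}
      (t * (3 * k - 1)) :=
  stmt_11_general k t m hk hm₁ hm₂
end

section
/- If G is a graph of order n with no chorded cycle, then there exists a linear ordering v₁, ..., v_n of the vertices of G such that each v_i has at most two neighbors among v₁, ..., v_{i−1}. -/
/-!
Take a longest path `p` starting at a vertex `a`; by maximality every neighbour of `a` lies on `p`.
If `w` is the last neighbour of `a` along `p`, the initial segment of `p` up to `w` closes with the
edge `wa` to a cycle containing all neighbours of `a`, and every neighbour other than `w` and the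
successor of `a` on `p` would be the end of a chord. So `a` has degree at most two. Having no
chorded cycle passes to induced subgraphs, so removing such a vertex and recursing builds the
ordering from the back.
-/

section

open SimpleGraph Walk

variable {V W : Type*} {G : SimpleGraph V} {H : SimpleGraph W}

theorem NoChordedCycle.of_hom_injective (hH : NoChordedCycle H) (f : G →g H)
    (hf : Function.Injective f) : NoChordedCycle G := by
  rintro u c hc ⟨a, b, ha, hb, hab, hnot⟩
  refine hH _ (c.map f) (hc.map hf) ⟨f a, f b, ?_, ?_, f.map_adj hab, ?_⟩
  · simpa [Walk.support_map] using ⟨a, ha, rfl⟩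
  · simpa [Walk.support_map] using ⟨b, hb, rfl⟩
  · rw [edges_map, List.mem_map]
    rintro ⟨e, he, hfe⟩
    rw [show e = s(a, b) from Sym2.map.injective hf hfe] at he
    exact hnot he

theorem SimpleGraph.exists_isPath_forall_adj_mem_support [Finite V] [Nonempty V]
    (G : SimpleGraph V) :
    ∃ (a b : V) (p : G.Walk a b), p.IsPath ∧ ∀ u, G.Adj a u → u ∈ p.support := by
  classical
  have := Fintype.ofFinite V
  have : Nonempty (Σ a b, G.Path a b) := ⟨⟨Classical.arbitrary V, _, Path.nil⟩⟩
  obtain ⟨⟨a, b, p⟩, hmax⟩ := Finite.exists_max fun p : Σ a b, G.Path a b ↦ p.2.2.1.length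
  refine ⟨a, b, p, p.2, fun u hu ↦ by_contra fun hup ↦ ?_⟩
  have := hmax ⟨u, b, ⟨cons hu.symm p, p.2.cons hup⟩⟩
  simp at this

theorem NoChordedCycle.eq_or_eq_snd_of_adj (hG : NoChordedCycle G) {a w u : V}
    {q : G.Walk a w} (hq : q.IsPath) (haw : G.Adj a w) (hu : u ∈ q.support) (hau : G.Adj a u) :
    u = w ∨ u = q.snd := by
  by_cases hw : s(a, w) ∈ q.edges
  · -- then `q` is the single edge `aw`
    left
    have hsnd : q.getVert 1 = q.getVert q.length := by
      rw [getVert_length]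
      exact (hq.eq_snd_of_mem_edges hw).symm
    have hpos : q.length ≠ 0 := fun h ↦ haw.ne (eq_of_length_eq_zero h)
    have hlen : 1 = q.length := hq.getVert_injOn (by simp; omega) (by simp) hsnd
    obtain ⟨m, rfl, hm⟩ := mem_support_iff_exists_getVert.1 hu
    have : m ≠ 0 := by
      rintro rfl
      exact hau.ne (getVert_zero q).symm
    rw [show m = 1 by omega, hsnd, getVert_length]
  · by_contra! h
    have hc : (cons haw.symm q).IsCycle := (cons_isCycle_iff q _).2 ⟨hq, by rwa [Sym2.eq_swap]⟩
    refine hG w _ hc ⟨a, u, by simp, by simp [hu], hau, ?_⟩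
    rw [edges_cons, List.mem_cons, Sym2.eq_iff, not_or]
    exact ⟨by grind [haw.ne], fun hmem ↦ h.2 (hq.eq_snd_of_mem_edges hmem)⟩

theorem NoChordedCycle.exists_ncard_neighborSet_le_two [Finite V] [Nonempty V]
    (hG : NoChordedCycle G) : ∃ v, (G.neighborSet v).ncard ≤ 2 := by
  classical
  obtain ⟨a, _, p, hp, hsupp⟩ := G.exists_isPath_forall_adj_mem_support
  refine ⟨a, ?_⟩
  rcases (G.neighborSet a).eq_empty_or_nonempty with h | ⟨u₀, hu₀⟩
  · simp [h]
  have hidx : ∀ u, G.Adj a u → ∃ m ≤ p.length, p.getVert m = u := fun u hu ↦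
    (mem_support_iff_exists_getVert.1 (hsupp u hu)).imp fun _ ⟨h1, h2⟩ ↦ ⟨h2, h1⟩
  set n := Nat.findGreatest (fun n ↦ G.Adj a (p.getVert n)) p.length
  have haw : G.Adj a (p.getVert n) := by
    obtain ⟨m, hm, rfl⟩ := hidx u₀ hu₀
    exact Nat.findGreatest_spec (P := fun n ↦ G.Adj a (p.getVert n)) hm hu₀
  have hsub : G.neighborSet a ⊆ {p.getVert n, (p.take n).snd} := by
    intro u hu
    obtain ⟨m, hm, rfl⟩ := hidx u hu
    have hmem : p.getVert m ∈ (p.take n).support := by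
      rw [← min_eq_right (Nat.le_findGreatest (P := fun n ↦ G.Adj a (p.getVert n)) hm hu),
        ← take_getVert]
      exact getVert_mem_support _ _
    exact hG.eq_or_eq_snd_of_adj (hp.take n) haw hmem hu
  calc (G.neighborSet a).ncard ≤ ({p.getVert n, (p.take n).snd} : Set V).ncard :=
        Set.ncard_le_ncard hsub
    _ ≤ 2 := (Set.ncard_insert_le _ _).trans (by simp)

theorem SimpleGraph.exists_equiv_fin_succ_of_ncard_neighborSet_le [Finite V] {n k : ℕ} {v : V}
    (hv : (G.neighborSet v).ncard ≤ k) (σ : Fin n ≃ {b // b ≠ v})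
    (hσ : ∀ i, {j | j < i ∧ G.Adj (σ i) (σ j)}.ncard ≤ k) :
    ∃ τ : Fin (n + 1) ≃ V, ∀ i, {j | j < i ∧ G.Adj (τ i) (τ j)}.ncard ≤ k := by
  classical
  let τ : Fin (n + 1) ≃ V := finSuccEquivLast.trans (σ.optionCongr.trans (.optionSubtypeNe v))
  have hlast : τ (Fin.last n) = v := by simp [τ]
  have hcastSucc (j : Fin n) : τ j.castSucc = σ j := by simp [τ]
  refine ⟨τ, Fin.lastCases ?_ fun i ↦ ?_⟩
  · rw [hlast]
    exact (Set.ncard_le_ncard_of_injOn τ (fun j hj ↦ hj.2) τ.injective.injOn).trans hv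
  · have : {j | j < i.castSucc ∧ G.Adj (τ i.castSucc) (τ j)} =
        Fin.castSucc '' {j | j < i ∧ G.Adj (σ i) (σ j)} := by
      ext j
      induction j using Fin.lastCases with
      | last => simp [(Fin.castSucc_lt_last i).not_gt]
      | cast j => simp [hcastSucc]
    rw [this, Set.ncard_image_of_injective _ (Fin.castSucc_injective n)]
    exact hσ i

theorem NoChordedCycle.exists_equiv_fin [Finite V] (hG : NoChordedCycle G) {n : ℕ}
    (hn : Nat.card V = n) :
    ∃ σ : Fin n ≃ V, ∀ i, {j | j < i ∧ G.Adj (σ i) (σ j)}.ncard ≤ 2 := by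
  induction n generalizing V with
  | zero =>
    have := Finite.card_eq_zero_iff.1 hn
    exact ⟨Equiv.equivOfIsEmpty _ _, fun i ↦ i.elim0⟩
  | succ n ih =>
    classical
    have : Nonempty V := Nat.card_pos_iff.1 (by omega) |>.1
    obtain ⟨v, hv⟩ := hG.exists_ncard_neighborSet_le_two
    let e := Function.Embedding.subtype fun b ↦ b ≠ v
    have hcard : Nat.card {b // b ≠ v} = n := by
      rw [← Nat.card_congr (Equiv.optionSubtypeNe v), Finite.card_option] at hn
      omega
    obtain ⟨σ, hσ⟩ := ih (hG.of_hom_injective (Embedding.comap e G).toHom e.injective) hcard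
    exact exists_equiv_fin_succ_of_ncard_neighborSet_le hv σ hσ

end

/-- A graph with no chorded cycle has a vertex ordering in which every
vertex has at most two neighbors preceding it. -/
theorem stmt_13 {V : Type*} [Fintype V] (G : SimpleGraph V) (hnc : NoChordedCycle G) :
    ∃ σ : Fin (Fintype.card V) ≃ V,
      ∀ i, {j : Fin (Fintype.card V) | j < i ∧ G.Adj (σ i) (σ j)}.ncard ≤ 2 :=
  hnc.exists_equiv_fin Nat.card_eq_fintype_card
end

section
/- Every graph with no chorded cycle is 3-colorable (tripartite). -/
/-!
A finite graph with no chorded cycle has a vertex of degree at most two: let `p` be a longest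
path, starting at `u`. Every neighbour of `u` lies on `p`. If `u` had two neighbours `x`, `y`
besides its successor `s` on `p`, with `x` before `y`, then `u`, `s`, …, `y`, `u` would be a
cycle with chord `ux`. Removing such a vertex and colouring greedily gives a 3-colouring of every
finite graph without chorded cycles, and the de Bruijn–Erdős compactness theorem extends this to
infinite graphs.
-/

open Finset SimpleGraph

namespace SimpleGraph

variable {V : Type*} {G : SimpleGraph V}

lemma Walk.mem_support_takeUntil_or [DecidableEq V] {u v x y : V} (p : G.Walk u v)
    (hx : x ∈ p.support) (hy : y ∈ p.support) :
    x ∈ (p.takeUntil y hy).support ∨ y ∈ (p.takeUntil x hx).support := by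
  rcases List.prefix_or_prefix_of_prefix (p.support_takeUntil_prefix_support hx)
    (p.support_takeUntil_prefix_support hy) with hxy | hyx
  · exact .inl (hxy.subset (Walk.end_mem_support _))
  · exact .inr (hyx.subset (Walk.end_mem_support _))

lemma Colorable.of_induce_compl_singleton {n : ℕ} {v : V} [Fintype (G.neighborSet v)]
    (hv : G.degree v < n) (h : (G.induce {v}ᶜ).Colorable n) : G.Colorable n := by
  classical
  obtain ⟨C⟩ := h
  have : NeZero n := ⟨by omega⟩
  let colorWith (c : Fin n) (w : V) : Fin n := if hw : w = v then c else C ⟨w, hw⟩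
  obtain ⟨c, -, hc⟩ := exists_mem_notMem_of_card_lt_card
    (s := (G.neighborFinset v).image (colorWith default)) (t := univ) <| calc
      _ ≤ #(G.neighborFinset v) := card_image_le
      _ < #(univ : Finset (Fin n)) := by rwa [card_neighborFinset_eq_degree, card_univ,
        Fintype.card_fin]
  have colorWith_v : colorWith c v = c := dif_pos rfl
  have colorWith_of_adj {w : V} (hw : G.Adj v w) : colorWith c w ≠ c := by
    have : colorWith c w = colorWith default w := by simp [colorWith, hw.ne']
    exact this ▸ fun h => hc (h ▸ mem_image_of_mem _ ((mem_neighborFinset _ _ _).2 hw))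
  refine ⟨Coloring.mk (colorWith c) fun {a b} hab => ?_⟩
  by_cases ha : a = v
  · subst ha; rw [colorWith_v]; exact (colorWith_of_adj hab).symm
  by_cases hb : b = v
  · subst hb; rw [colorWith_v]; exact colorWith_of_adj hab.symm
  simp only [colorWith, ha, hb, dite_false]
  exact C.valid (show (G.induce {v}ᶜ).Adj ⟨a, ha⟩ ⟨b, hb⟩ from hab)

lemma colorable_of_forall_finite_subgraph {n : ℕ}
    (h : ∀ G' : G.Subgraph, G'.verts.Finite → G'.coe.Colorable n) : G.Colorable n :=
  nonempty_hom_of_forall_finite_subgraph_hom fun G' hG' => (h G' hG').some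

end SimpleGraph

namespace NoChordedCycle

variable {V W : Type*} {G : SimpleGraph V}

lemma comap {H : SimpleGraph W} (f : H →g G) (hf : Function.Injective f)
    (hG : NoChordedCycle G) : NoChordedCycle H := by
  rintro u c hc ⟨a, b, ha, hb, hab, hne⟩
  refine hG (f u) (c.map f) (hc.map hf) ⟨f a, f b, ?_, ?_, f.map_adj hab, ?_⟩
  · simpa [Walk.support_map] using ⟨a, ha, rfl⟩
  · simpa [Walk.support_map] using ⟨b, hb, rfl⟩
  · rwa [Walk.edges_map, ← Sym2.map_mk, List.mem_map_of_injective (Sym2.map.injective hf)]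

/-- Closing the path through `u` gives a cycle, on which `ux` would be a chord. -/
lemma eq_or_eq_of_adj_of_mem_support {u s x y : V} (hG : NoChordedCycle G) {r : G.Walk s y}
    (hr : r.IsPath) (hu : u ∉ r.support) (hys : y ≠ s) (hs : G.Adj u s) (hy : G.Adj u y)
    (hx : G.Adj u x) (hxr : x ∈ r.support) : x = s ∨ x = y := by
  have not_mem_edges {z : V} : s(u, z) ∉ r.edges := fun h => hu (r.fst_mem_support_of_mem_edges h)
  have hcycle : (Walk.cons hy (Walk.cons hs r).reverse).IsCycle := by
    refine (Walk.cons_isCycle_iff _ _).2 ⟨(hr.cons hu).reverse, ?_⟩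
    simp [Walk.edges_reverse, hys, hs.ne, not_mem_edges]
  by_contra! hxsy
  refine hG u _ hcycle ⟨u, x, Walk.start_mem_support _, ?_, hx, ?_⟩
  · simp [hxr]
  · simp [Walk.edges_reverse, hxsy.1, hxsy.2, hs.ne, hy.ne, not_mem_edges]

lemma degree_le_two_of_isPath {u v : V} (hG : NoChordedCycle G) [Fintype (G.neighborSet u)]
    {p : G.Walk u v} (hp : p.IsPath) (hnbr : ∀ w, G.Adj u w → w ∈ p.support) :
    G.degree u ≤ 2 := by
  classical
  by_contra! hdeg
  cases p with
  | nil =>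
    obtain ⟨w, hw⟩ := (G.degree_pos_iff_exists_adj u).1 (by omega)
    simpa [hw.ne'] using hnbr w hw
  | @cons _ s _ hs q =>
    rw [Walk.cons_isPath_iff] at hp
    have mem_q {w : V} (hw : G.Adj u w) : w ∈ q.support := by simpa [hw.ne'] using hnbr w hw
    have not_before {x y : V} (hx : x ≠ s ∧ G.Adj u x) (hy : y ≠ s ∧ G.Adj u y) (hxy : x ≠ y)
        (hbefore : x ∈ (q.takeUntil y (mem_q hy.2)).support) : False :=
      (hG.eq_or_eq_of_adj_of_mem_support (hp.1.takeUntil _)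
        (fun h => hp.2 (q.support_takeUntil_subset_support _ h)) hy.1 hs hy.2 hx.2 hbefore).elim
        hx.1 hxy
    obtain ⟨x, hx, y, hy, hxy⟩ := one_lt_card.1 <| show 1 < #((G.neighborFinset u).erase s) by
      rw [card_erase_of_mem ((mem_neighborFinset _ _ _).2 hs), card_neighborFinset_eq_degree]
      omega
    simp only [mem_erase, mem_neighborFinset] at hx hy
    rcases q.mem_support_takeUntil_or (mem_q hx.2) (mem_q hy.2) with h | h
    exacts [not_before hx hy hxy h, not_before hy hx hxy.symm h]

lemma exists_degree_le_two [Fintype V] [Nonempty V] [DecidableRel G.Adj]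
    (hG : NoChordedCycle G) : ∃ v, G.degree v ≤ 2 := by
  obtain ⟨u, v, p, hp, hmax⟩ := Walk.exists_isPath_forall_isPath_length_le_length G
  refine ⟨u, hG.degree_le_two_of_isPath hp fun w hw => ?_⟩
  by_contra hwp
  simpa using hmax _ _ _ (hp.cons hwp (h := hw.symm))

theorem colorable_three_of_finite [Finite V] (hG : NoChordedCycle G) : G.Colorable 3 := by
  induction h : Nat.card V generalizing V with
  | zero =>
    have : IsEmpty V := Finite.card_eq_zero_iff.1 h
    exact .of_isEmpty 3
  | succ n ih =>
    have : Nonempty V := Finite.card_pos_iff.1 (by omega)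
    have := Fintype.ofFinite V
    classical
    obtain ⟨v, hv⟩ := hG.exists_degree_le_two
    refine .of_induce_compl_singleton (v := v) (by omega)
      (ih (hG.comap (Embedding.induce _).toHom Subtype.val_injective) ?_)
    rw [Nat.card_coe_set_eq, Set.ncard_compl, Set.ncard_singleton, h, Nat.add_sub_cancel]

end NoChordedCycle

/-- Every graph with no chorded cycle is 3-colorable. -/
theorem stmt_14 {V : Type*} (G : SimpleGraph V) (hnc : NoChordedCycle G) :
    G.Colorable 3 :=
  colorable_of_forall_finite_subgraph fun G' hG' =>
    have := hG'.to_subtype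
    (hnc.comap G'.hom Subgraph.hom_injective).colorable_three_of_finite
end

section
/- If every vertex of a graph G of order n ≥ 4 has degree at least 3, then G contains a chorded cycle. -/
namespace SimpleGraph

variable {V : Type*} {G : SimpleGraph V}

theorem exists_isPath_forall_length_le [Fintype V] [Nonempty V] :
    ∃ (u v : V) (p : G.Walk u v), p.IsPath ∧
      ∀ (x y : V) (q : G.Walk x y), q.IsPath → q.length ≤ p.length := by
  classical
  let IsPathLength (n : ℕ) : Prop := ∃ (u v : V) (p : G.Walk u v), p.IsPath ∧ p.length = n
  have hzero : IsPathLength 0 := ⟨Classical.ofNonempty, _, .nil, .nil, rfl⟩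
  obtain ⟨u, v, p, hp, hlen⟩ := Nat.findGreatest_spec (Nat.zero_le (Fintype.card V)) hzero
  refine ⟨u, v, p, hp, fun x y q hq => ?_⟩
  rw [hlen]
  exact Nat.le_findGreatest hq.length_lt.le ⟨x, y, q, hq, rfl⟩

namespace Walk

variable {u v w x y : V}

theorem IsPath.mem_support_of_adj_of_forall_length_le {p : G.Walk v u} (hp : p.IsPath)
    (hmax : ∀ (x y : V) (q : G.Walk x y), q.IsPath → q.length ≤ p.length) (huw : G.Adj u w) :
    w ∈ p.support := by
  by_contra hw
  have := hmax _ _ _ (hp.concat hw huw)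
  rw [length_concat] at this
  omega

theorem mem_support_dropUntil_of_mem_support [DecidableEq V] {p : G.Walk u v}
    (hx : x ∈ p.support) (hw : w ∈ p.support)
    (hfirst : w ∈ (p.takeUntil x hx).support → w = x) :
    w ∈ (p.dropUntil x hx).support := by
  rw [← take_spec p hx, mem_support_append_iff] at hw
  rcases hw with hw | hw
  · rw [hfirst hw]
    exact start_mem_support _
  · exact hw

theorem IsPath.isCycle_cons {q : G.Walk x u} (hq : q.IsPath) (hux : G.Adj u x)
    (hy : y ∈ q.support) (hyx : y ≠ x) (hyu : y ≠ u) : (cons hux q).IsCycle := by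
  refine (cons_isCycle_iff q hux).mpr ⟨hq, fun he => ?_⟩
  have hsupport : q.support = [x, u] := by
    rw [hq.eq_adj_toWalk_of_mem_edges (Sym2.eq_swap ▸ he)]
    rfl
  simp [hsupport, hyx, hyu] at hy

theorem IsPath.hasChord_cons {q : G.Walk x u} (hq : q.IsPath) (hux : G.Adj u x)
    (huy : G.Adj u y) (hy : y ∈ q.support) (hyx : y ≠ x) (hyp : y ≠ q.penultimate) :
    HasChord G (cons hux q) := by
  refine ⟨u, y, start_mem_support _, by simp [hy], huy, ?_⟩
  rw [edges_cons, List.mem_cons, Sym2.congr_right]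
  rintro (hyx' | he)
  · exact hyx hyx'
  · exact hyp (hq.eq_penultimate_of_mem_edges he)

end Walk

end SimpleGraph

/-- If every vertex of a graph of order n ≥ 4 has degree at least 3,
then the graph contains a chorded cycle. -/
theorem stmt_18 {V : Type*} [Fintype V] (G : SimpleGraph V) [DecidableRel G.Adj]
    (hn : 4 ≤ Fintype.card V) (hdeg : ∀ v : V, 3 ≤ G.degree v) :
    ∃ (u : V) (c : G.Walk u u), c.IsCycle ∧ HasChord G c := by
  classical
  have : Nonempty V := Fintype.card_pos_iff.mp (by omega)
  obtain ⟨v, u, p, hp, hmax⟩ := SimpleGraph.exists_isPath_forall_length_le (G := G)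
  have hdeg_u : 2 < (G.neighborFinset u).card := G.card_neighborFinset_eq_degree u ▸ hdeg u
  have hN : ∀ w ∈ G.neighborFinset u, w ∈ p.support := fun w hw =>
    hp.mem_support_of_adj_of_forall_length_le hmax ((G.mem_neighborFinset u w).mp hw)
  obtain ⟨x, hxN, hxp, hfirst⟩ := p.exists_mem_support_forall_mem_support_imp_eq
    (G.neighborFinset u) (by rw [Finset.filter_true_of_mem hN]; exact Finset.card_pos.mp (by omega))
  set q := p.dropUntil x hxp
  have hq : q.IsPath := hp.dropUntil hxp
  have hux : G.Adj u x := (G.mem_neighborFinset u x).mp hxN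
  obtain ⟨y, hyN, hyxp⟩ := Finset.exists_mem_notMem_of_card_lt_card
    (s := {x, q.penultimate}) (Finset.card_le_two.trans_lt hdeg_u)
  simp only [Finset.mem_insert, Finset.mem_singleton, not_or] at hyxp
  have huy : G.Adj u y := (G.mem_neighborFinset u y).mp hyN
  have hyq : y ∈ q.support :=
    SimpleGraph.Walk.mem_support_dropUntil_of_mem_support hxp (hN y hyN) (hfirst y hyN)
  exact ⟨u, .cons hux q, hq.isCycle_cons hux hyq hyxp.1 huy.ne.symm,
    hq.hasChord_cons hux huy hyq hyxp.1 hyxp.2⟩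
end

section
/- Let H be a connected graph with no chorded cycle. Then either H is a cycle, or the set S of vertices of H having degree at most 2 induces a forest in H. -/
namespace SimpleGraph

variable {V : Type*} {G : SimpleGraph V}

theorem Reachable.mem_of_forall_adj_mem {s : Set V} (hs : ∀ a ∈ s, ∀ b, G.Adj a b → b ∈ s)
    {u v : V} (huv : G.Reachable u v) (hu : u ∈ s) : v ∈ s := by
  obtain ⟨p⟩ := huv
  induction p with
  | nil => exact hu
  | cons h _ ih => exact ih (hs _ hu _ h)

theorem exists_isCycle_forall_mem_of_not_isAcyclic_induce {s : Set V}
    (h : ¬(G.induce s).IsAcyclic) :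
    ∃ (u : V) (c : G.Walk u u), c.IsCycle ∧ ∀ v ∈ c.support, v ∈ s := by
  simp only [IsAcyclic, not_forall, not_not] at h
  obtain ⟨u, c, hc⟩ := h
  let f := Embedding.induce (G := G) s
  refine ⟨f u, c.map f.toHom, hc.map f.injective, fun v hv => ?_⟩
  obtain ⟨x, -, rfl⟩ := List.mem_map.mp (c.support_map f.toHom ▸ hv)
  exact x.2

namespace Walk.IsCycle

variable [G.LocallyFinite] {u : V} {c : G.Walk u u}

theorem neighborSet_toSubgraph_eq (hc : c.IsCycle) {v : V} (hv : v ∈ c.support)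
    (hdeg : G.degree v ≤ 2) : c.toSubgraph.neighborSet v = G.neighborSet v := by
  refine Set.eq_of_subset_of_ncard_le (c.toSubgraph.neighborSet_subset v) ?_ (Set.toFinite _)
  rw [hc.ncard_neighborSet_toSubgraph_eq_two hv, Set.ncard_eq_toFinset_card',
    ← neighborFinset_def, card_neighborFinset_eq_degree]
  exact hdeg

theorem mem_edges_of_adj (hc : c.IsCycle) {v w : V} (hv : v ∈ c.support)
    (hdeg : G.degree v ≤ 2) (hvw : G.Adj v w) : s(v, w) ∈ c.edges := by
  rw [← mem_edges_toSubgraph, Subgraph.mem_edgeSet, ← Subgraph.mem_neighborSet,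
    hc.neighborSet_toSubgraph_eq hv hdeg]
  exact hvw

theorem mem_support_of_connected (hc : c.IsCycle) (hdeg : ∀ v ∈ c.support, G.degree v ≤ 2)
    (hG : G.Connected) (x : V) : x ∈ c.support :=
  (hG u x).mem_of_forall_adj_mem (s := {v | v ∈ c.support})
    (fun _ ha _ hab => c.snd_mem_support_of_mem_edges (hc.mem_edges_of_adj ha (hdeg _ ha) hab))
    c.start_mem_support

theorem mem_edges_of_connected (hc : c.IsCycle) (hdeg : ∀ v ∈ c.support, G.degree v ≤ 2)
    (hG : G.Connected) {e : Sym2 V} (he : e ∈ G.edgeSet) : e ∈ c.edges := by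
  induction e with
  | h a b =>
    have ha := hc.mem_support_of_connected hdeg hG a
    exact hc.mem_edges_of_adj ha (hdeg a ha) he

end Walk.IsCycle

end SimpleGraph

theorem stmt_19_general {V : Type*} [Fintype V] (H : SimpleGraph V) [DecidableRel H.Adj]
    (hconn : H.Connected) :
    (∃ (u : V) (c : H.Walk u u), c.IsCycle ∧ (∀ x : V, x ∈ c.support) ∧
      ∀ e ∈ H.edgeSet, e ∈ c.edges) ∨
    (H.induce {v : V | H.degree v ≤ 2}).IsAcyclic := by
  refine or_iff_not_imp_right.mpr fun hcyc => ?_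
  obtain ⟨u, c, hc, hdeg⟩ := SimpleGraph.exists_isCycle_forall_mem_of_not_isAcyclic_induce hcyc
  exact ⟨u, c, hc, hc.mem_support_of_connected hdeg hconn,
    fun _ => hc.mem_edges_of_connected hdeg hconn⟩

/-- If H is connected with no chorded cycle, then either H is a cycle,
or the set S of vertices of degree at most 2 induces a forest in H. -/
theorem stmt_19 {V : Type*} [Fintype V] (H : SimpleGraph V) [DecidableRel H.Adj]
    (hconn : H.Connected) (hnc : NoChordedCycle H) :
    (∃ (u : V) (c : H.Walk u u), c.IsCycle ∧ (∀ x : V, x ∈ c.support) ∧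
      ∀ e ∈ H.edgeSet, e ∈ c.edges) ∨
    (H.induce {v : V | H.degree v ≤ 2}).IsAcyclic :=
  stmt_19_general H hconn
end
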